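/- arXiv:2110.07565 — 8 statements merged into one kernel-verified Lean document; each statement's English description precedes it below -/
import Mathlib

section
/- Let ψ : (0,1] → (0,∞) be a cuspidal function, and for t̂ ∈ (0,1) let (t_{t̂}, r_{t̂}) be the unique pair with 0 < t_{t̂} < 1, ψ(t_{t̂}) ≤ r_{t̂} ≤ lim_{s→t_{t̂}⁺} ψ(s) and t_{t̂} + r_{t̂} = (1+ψ(1)) t̂. Then the function ψ̂ : (0,1] → (0,∞) defined by ψ̂(t̂) = r_{t̂} for t̂ ∈ (0,1) (and ψ̂(1) = ψ(1)) is an increasing, Lipschitz continuous cuspidal function. -/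
open MeasureTheory Set Filter Topology
open scoped ENNReal NNReal

noncomputable section

/-- `ℝⁿ` modeled as `ℝ × ℝ^{n-1}`, with points written `z = (t, x)`. -/
abbrev Rn (n : ℕ) : Type := ℝ × EuclideanSpace ℝ (Fin (n - 1))

/-- A cuspidal function: a left-continuous, increasing (non-strict) function
`ψ : (0,1] → (0,∞)`, modeled as a real function with these properties on `Ioc 0 1`. -/
structure IsCuspidal (ψ : ℝ → ℝ) : Prop where
  pos : ∀ t ∈ Set.Ioc (0:ℝ) 1, 0 < ψ t
  mono : MonotoneOn ψ (Set.Ioc 0 1)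
  leftCont : ∀ t ∈ Set.Ioc (0:ℝ) 1, ContinuousWithinAt ψ (Set.Iio t) t

/-- The outward cuspidal domain
`Ω_ψⁿ = {(t,x) ∈ (0,1]×ℝ^{n-1} : |x| < ψ(t)} ∪ {(t,x) ∈ [1,2)×ℝ^{n-1} : |x| < ψ(1)}`. -/
def cuspDomain (n : ℕ) (ψ : ℝ → ℝ) : Set (Rn n) :=
  {z | z.1 ∈ Set.Ioc (0:ℝ) 1 ∧ ‖z.2‖ < ψ z.1} ∪
    {z | z.1 ∈ Set.Ico (1:ℝ) 2 ∧ ‖z.2‖ < ψ 1}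

/-- The double outward cuspidal domain
`Ω̂_ψⁿ = {(t,x) ∈ (0,1]×ℝ^{n-1} : |x| < 2ψ(t)} ∪ {(t,x) ∈ [1,3)×ℝ^{n-1} : |x| < 2ψ(1)}`. -/
def doubleCuspDomain (n : ℕ) (ψ : ℝ → ℝ) : Set (Rn n) :=
  {z | z.1 ∈ Set.Ioc (0:ℝ) 1 ∧ ‖z.2‖ < 2 * ψ z.1} ∪
    {z | z.1 ∈ Set.Ico (1:ℝ) 3 ∧ ‖z.2‖ < 2 * ψ 1}

section Sobolev

variable {E : Type*} [NormedAddCommGroup E] [NormedSpace ℝ E] [MeasureSpace E]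

/-- `v` is a weak (distributional) gradient of `u` on `Ω`: integration by parts against
all smooth compactly supported test functions with support in `Ω`. -/
def HasWeakGradientOn (Ω : Set E) (u : E → ℝ) (v : E → E →L[ℝ] ℝ) : Prop :=
  ∀ φ : E → ℝ, ContDiff ℝ (⊤ : ℕ∞) φ → HasCompactSupport φ → tsupport φ ⊆ Ω →
    ∀ e : E, ∫ z in Ω, u z * fderiv ℝ φ z e = - ∫ z in Ω, v z e * φ z

/-- Membership in the Sobolev space `W^{1,p}(Ω)`: `u ∈ L^p(Ω)` and `u` has a weak
gradient belonging to `L^p(Ω)`. -/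
def MemW1p (p : ℝ≥0∞) (Ω : Set E) (u : E → ℝ) : Prop :=
  MemLp u p (volume.restrict Ω) ∧
    ∃ v : E → E →L[ℝ] ℝ, HasWeakGradientOn Ω u v ∧ MemLp v p (volume.restrict Ω)

/-- The `W^{1,p}(Ω)` norm `‖u‖_{L^p(Ω)} + ‖∇u‖_{L^p(Ω)}` (the infimum is over all weak
gradients, which agree a.e., taking value `∞` if none exists). -/
def w1pNorm (p : ℝ≥0∞) (Ω : Set E) (u : E → ℝ) : ℝ≥0∞ :=
  eLpNorm u p (volume.restrict Ω) +
    ⨅ v : {v : E → E →L[ℝ] ℝ // HasWeakGradientOn Ω u v},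
      eLpNorm v.1 p (volume.restrict Ω)

/-- `Ext` is a bounded extension operator from `W^{1,p}(Ω)` to `W^{1,q}(ℝⁿ)`:
`Ext u = u` on `Ω` and `‖Ext u‖_{W^{1,q}(ℝⁿ)} ≤ C ‖u‖_{W^{1,p}(Ω)}`. -/
def IsBoundedExtOp (p q : ℝ≥0∞) (Ω : Set E) (Ext : (E → ℝ) → (E → ℝ)) : Prop :=
  ∃ C : ℝ, 0 < C ∧ ∀ u : E → ℝ, MemW1p p Ω u →
    (Ext u =ᵐ[volume.restrict Ω] u) ∧ MemW1p q Set.univ (Ext u) ∧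
      w1pNorm q Set.univ (Ext u) ≤ ENNReal.ofReal C * w1pNorm p Ω u

/-- `Ext` is a bounded linear extension operator from `W^{1,p}(Ω)` to `W^{1,q}(ℝⁿ)`. -/
def IsBoundedLinearExtOp (p q : ℝ≥0∞) (Ω : Set E) (Ext : (E → ℝ) → (E → ℝ)) : Prop :=
  (∀ u v : E → ℝ, Ext (u + v) = Ext u + Ext v) ∧
    (∀ (c : ℝ) (u : E → ℝ), Ext (c • u) = c • Ext u) ∧
    IsBoundedExtOp p q Ω Ext

/-- `Ω` is a Sobolev `(p,q)`-extension domain. -/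
def IsSobolevExtensionDomain (p q : ℝ≥0∞) (Ω : Set E) : Prop :=
  ∃ Ext : (E → ℝ) → (E → ℝ), IsBoundedExtOp p q Ω Ext

end Sobolev

/-- The right-hand limit `lim_{s→t⁺} ψ(s)` of an increasing function `ψ : (0,1] → (0,∞)`
at `t ∈ (0,1)`, which equals `inf {ψ(s) : s ∈ (t,1]}`. -/
def rightLimAt (ψ : ℝ → ℝ) (t : ℝ) : ℝ := sInf (ψ '' Set.Ioc t 1)

/-- `(t, r)` is the pair associated to `t̂` in Lemma 3.1:
`0 < t < 1`, `ψ(t) ≤ r ≤ lim_{s→t⁺} ψ(s)` and `t + r = (1+ψ(1)) t̂`. -/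
def IsHatPair (ψ : ℝ → ℝ) (that t r : ℝ) : Prop :=
  0 < t ∧ t < 1 ∧ 0 < r ∧ ψ t ≤ r ∧ r ≤ rightLimAt ψ t ∧ t + r = (1 + ψ 1) * that

/-- `ψ̂` is the Lipschitz cuspidal function associated to `ψ`: for each `t̂ ∈ (0,1)`,
`ψ̂(t̂) = r_{t̂}` where `(t_{t̂}, r_{t̂})` is the unique pair of Lemma 3.1, and `ψ̂(1) = ψ(1)`. -/
def IsAssociatedHat (ψ ψhat : ℝ → ℝ) : Prop :=
  (∀ that ∈ Set.Ioo (0:ℝ) 1, ∃ t : ℝ, IsHatPair ψ that t (ψhat that)) ∧ ψhat 1 = ψ 1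

/-- The annular set `A_ψⁿ = {(t,x) ∈ (0,1]×ℝ^{n-1} : ψ(t) < |x| < 2ψ(t)}`. -/
def annulusSet (n : ℕ) (ψ : ℝ → ℝ) : Set (Rn n) :=
  {z | z.1 ∈ Set.Ioc (0:ℝ) 1 ∧ ψ z.1 < ‖z.2‖ ∧ ‖z.2‖ < 2 * ψ z.1}

/-- The cut-off function `L(t,x) = 2 - |x|/ψ(t)`. -/
def cutoffL (n : ℕ) (ψ : ℝ → ℝ) : Rn n → ℝ := fun z => 2 - ‖z.2‖ / ψ z.1

/-- The reflection `ℛ(t,x) = (t, (-|x|/2 + (3/2)ψ(t)) x/|x|)`. -/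
def reflectR (n : ℕ) (ψ : ℝ → ℝ) : Rn n → Rn n :=
  fun z => (z.1, ((-‖z.2‖ / 2 + 3 / 2 * ψ z.1) / ‖z.2‖) • z.2)

lemma hat_key (ψ ψhat : ℝ → ℝ) (hψ : IsCuspidal ψ)
    (hhat : IsAssociatedHat ψ ψhat) {a b : ℝ} (ha : a ∈ Set.Ioc (0:ℝ) 1)
    (hb : b ∈ Set.Ioc (0:ℝ) 1) (hab : a ≤ b) :
    ψhat a ≤ ψhat b ∧ ψhat b - ψhat a ≤ (1 + ψ 1) * (b - a) := by
  have hψ1 : 0 < ψ 1 := hψ.pos 1 ⟨one_pos, le_refl 1⟩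
  rcases eq_or_lt_of_le hab with rfl | hlt
  · constructor <;> simp
  have ha1 : a < 1 := lt_of_lt_of_le hlt hb.2
  obtain ⟨t₁, ht₁0, ht₁1, hr₁0, hr₁l, hr₁u, heq₁⟩ := hhat.1 a ⟨ha.1, ha1⟩
  have hbdd : ∀ t ∈ Set.Ioc (0:ℝ) 1, BddBelow (ψ '' Set.Ioc t 1) := by
    intro t ht
    refine ⟨ψ t, ?_⟩
    rintro y ⟨s, hs, rfl⟩
    exact hψ.mono ht ⟨lt_trans ht.1 hs.1, hs.2⟩ (le_of_lt hs.1)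
  rcases eq_or_lt_of_le hb.2 with rfl | hb1
  · -- b = 1
    have h1 : rightLimAt ψ t₁ ≤ ψ 1 := by
      apply csInf_le (hbdd t₁ ⟨ht₁0, le_of_lt ht₁1⟩)
      exact ⟨1, ⟨ht₁1, le_refl 1⟩, rfl⟩
    rw [hhat.2]
    constructor
    · linarith
    · nlinarith
  · -- b < 1
    obtain ⟨t₂, ht₂0, ht₂1, hr₂0, hr₂l, hr₂u, heq₂⟩ := hhat.1 b ⟨hb.1, hb1⟩
    have hc : (1 + ψ 1) * a < (1 + ψ 1) * b :=
      mul_lt_mul_of_pos_left hlt (by linarith)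
    have htt : t₁ ≤ t₂ := by
      by_contra h
      push_neg at h
      have h1 : rightLimAt ψ t₂ ≤ ψ t₁ := by
        apply csInf_le (hbdd t₂ ⟨ht₂0, le_of_lt ht₂1⟩)
        exact ⟨t₁, ⟨h, le_of_lt ht₁1⟩, rfl⟩
      linarith
    have hrr : ψhat a ≤ ψhat b := by
      rcases eq_or_lt_of_le htt with rfl | hlt'
      · linarith
      · have h1 : rightLimAt ψ t₁ ≤ ψ t₂ := by
          apply csInf_le (hbdd t₁ ⟨ht₁0, le_of_lt ht₁1⟩)
          exact ⟨t₂, ⟨hlt', le_of_lt ht₂1⟩, rfl⟩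
        linarith
    exact ⟨hrr, by linarith⟩

/-- the associated function `ψ̂` is an increasing Lipschitz cuspidal function. -/
theorem statement9 (ψ ψhat : ℝ → ℝ) (hψ : IsCuspidal ψ)
    (hhat : IsAssociatedHat ψ ψhat) :
    IsCuspidal ψhat ∧ MonotoneOn ψhat (Set.Ioc 0 1) ∧
      ∃ K : ℝ≥0, LipschitzOnWith K ψhat (Set.Ioc 0 1) := by
  have hψ1 : 0 < ψ 1 := hψ.pos 1 ⟨one_pos, le_refl 1⟩
  have key : ∀ {a b : ℝ}, a ∈ Set.Ioc (0:ℝ) 1 → b ∈ Set.Ioc (0:ℝ) 1 → a ≤ b → ψhat a ≤ ψhat b ∧ ψhat b - ψhat a ≤ (1 + ψ 1) * (b - a) := fun ha hb hab => hat_key ψ ψhat hψ hhat ha hb hab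
  have hmono : MonotoneOn ψhat (Set.Ioc 0 1) := fun a ha b hb hab => (key ha hb hab).1
  have hlip : LipschitzOnWith (1 + ψ 1).toNNReal ψhat (Set.Ioc 0 1) := by
    rw [lipschitzOnWith_iff_dist_le_mul]
    intro x hx y hy
    rw [Real.dist_eq, Real.dist_eq, Real.coe_toNNReal _ (by linarith)]
    rcases le_total x y with h | h
    · obtain ⟨h1, h2⟩ := key hx hy h
      rw [abs_of_nonpos (by linarith), abs_of_nonpos (by linarith)]
      linarith
    · obtain ⟨h1, h2⟩ := key hy hx h
      rw [abs_of_nonneg (by linarith), abs_of_nonneg (by linarith)]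
      linarith
  have hpos : ∀ t ∈ Set.Ioc (0:ℝ) 1, 0 < ψhat t := by
    intro t ht
    rcases eq_or_lt_of_le ht.2 with rfl | ht1
    · rw [hhat.2]; exact hψ1
    · obtain ⟨s, _, _, hr0, _⟩ := hhat.1 t ⟨ht.1, ht1⟩
      exact hr0
  refine ⟨⟨hpos, hmono, ?_⟩, hmono, ⟨_, hlip⟩⟩
  intro t ht
  have hc : ContinuousWithinAt ψhat (Set.Ioc 0 1) t :=
    hlip.continuousOn t ht
  apply hc.mono_of_mem_nhdsWithin
  rw [mem_nhdsWithin]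
  refine ⟨Set.Ioi 0, isOpen_Ioi, ht.1, ?_⟩
  rintro x ⟨hx0, hx1⟩
  exact ⟨hx0, le_of_lt (lt_of_lt_of_le hx1 ht.2)⟩
end
end

section
/- Let ψ : (0,1] → (0,∞) be a cuspidal function and let ψ̂ be the associated Lipschitz cuspidal function (defined by ψ̂(t̂) = r_{t̂}, where (t_{t̂}, r_{t̂}) is the unique pair with ψ(t_{t̂}) ≤ r_{t̂} ≤ lim_{s→t_{t̂}⁺} ψ(s) and t_{t̂} + r_{t̂} = (1+ψ(1)) t̂). Then there exists a global bi-Lipschitz homeomorphism 𝒪 : ℝⁿ → ℝⁿ such that 𝒪(Ω_ψⁿ) = Ω_{ψ̂}ⁿ. -/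
open MeasureTheory Set Filter Topology
open scoped ENNReal NNReal

noncomputable section

/-- Forward change of variable in the `t` direction, `c = 1 + ψ(1)`. -/
def auxF (c t σ : ℝ) : ℝ :=
  if t ≤ 1 then (t + σ) / c
  else if t ≤ 2 then (1 + σ) / c + (t - 1) * (2 - (1 + σ) / c)
  else t

/-- Inverse change of variable. -/
def auxG (c τ σ : ℝ) : ℝ :=
  if τ ≤ (1 + σ) / c then c * τ - σ
  else if τ ≤ 2 then 1 + (τ - (1 + σ) / c) * c / (2 * c - 1 - σ)
  else τ

lemma auxF_low {c t σ : ℝ} (h : t ≤ 1) : auxF c t σ = (t + σ) / c := if_pos h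

lemma auxF_mid {c t σ : ℝ} (h1 : 1 < t) (h2 : t ≤ 2) :
    auxF c t σ = (1 + σ) / c + (t - 1) * (2 - (1 + σ) / c) := by
  unfold auxF; rw [if_neg (by linarith), if_pos h2]

lemma auxF_high {c t σ : ℝ} (h : 2 < t) : auxF c t σ = t := by
  unfold auxF; rw [if_neg (by linarith), if_neg (by linarith)]

lemma auxG_low {c τ σ : ℝ} (h : τ ≤ (1 + σ) / c) : auxG c τ σ = c * τ - σ := if_pos h

lemma auxG_mid {c τ σ : ℝ} (h1 : (1 + σ) / c < τ) (h2 : τ ≤ 2) :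
    auxG c τ σ = 1 + (τ - (1 + σ) / c) * c / (2 * c - 1 - σ) := by
  unfold auxG; rw [if_neg (by linarith), if_pos h2]

lemma auxG_high {c τ σ : ℝ} (h1 : (1 + σ) / c < τ) (h2 : 2 < τ) : auxG c τ σ = τ := by
  unfold auxG; rw [if_neg (by linarith), if_neg (by linarith)]

lemma auxG_auxF {c σ : ℝ} (hc : 1 < c) (hσ1 : 0 ≤ σ) (hσ2 : σ ≤ c - 1) (t : ℝ) :
    auxG c (auxF c t σ) σ = t := by
  have hc0 : (0:ℝ) < c := by linarith
  have hden : (0:ℝ) < 2 * c - 1 - σ := by linarith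
  have hp1 : (1 + σ) / c ≤ 1 := by rw [div_le_one hc0]; linarith
  have hp0 : 0 < (1 + σ) / c := by positivity
  rcases le_or_gt t 1 with h1 | h1
  · rw [auxF_low h1, auxG_low (by gcongr)]
    field_simp
    ring
  · rcases le_or_gt t 2 with h2 | h2
    · have ha : 1 ≤ 2 - (1 + σ) / c := by linarith
      have hgt : (1 + σ) / c < (1 + σ) / c + (t - 1) * (2 - (1 + σ) / c) := by nlinarith
      have hle2 : (1 + σ) / c + (t - 1) * (2 - (1 + σ) / c) ≤ 2 := by nlinarith
      rw [auxF_mid h1 h2, auxG_mid hgt hle2]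
      field_simp [show c * 2 - 1 - σ ≠ 0 by linarith]
      ring
    · rw [auxF_high h2, auxG_high (by linarith) h2]

lemma auxF_auxG {c σ : ℝ} (hc : 1 < c) (hσ1 : 0 ≤ σ) (hσ2 : σ ≤ c - 1) (τ : ℝ) :
    auxF c (auxG c τ σ) σ = τ := by
  have hc0 : (0:ℝ) < c := by linarith
  have hden : (0:ℝ) < 2 * c - 1 - σ := by linarith
  have hp1 : (1 + σ) / c ≤ 1 := by rw [div_le_one hc0]; linarith
  have hp0 : 0 < (1 + σ) / c := by positivity
  rcases le_or_gt τ ((1 + σ) / c) with h1 | h1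
  · have hcτ : c * τ ≤ 1 + σ := by
      have := (le_div_iff₀ hc0).1 h1; linarith [this]
    rw [auxG_low h1, auxF_low (by linarith)]
    field_simp
    ring
  · have hcτ' : 1 + σ < c * τ := by
      have := (div_lt_iff₀ hc0).1 h1; linarith [this]
    rcases le_or_gt τ 2 with h2 | h2
    · have hkey : (τ - (1 + σ) / c) * c / (2 * c - 1 - σ) ≤ 1 := by
        rw [div_le_one hden, sub_mul, div_mul_cancel₀ _ (ne_of_gt hc0)]; nlinarith
      have hpos : 0 < (τ - (1 + σ) / c) * c / (2 * c - 1 - σ) := by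
        apply div_pos ?_ hden; nlinarith
      rw [auxG_mid h1 h2, auxF_mid (by linarith) (by linarith)]
      field_simp [show c * 2 - 1 - σ ≠ 0 by linarith]
      ring
    · rw [auxG_high h1 h2, auxF_high h2]


lemma auxF_mono_bounds {c σ : ℝ} (hc : 1 < c) (hσ1 : 0 ≤ σ) (hσ2 : σ ≤ c - 1)
    {t₁ t₂ : ℝ} (h : t₁ ≤ t₂) :
    (t₂ - t₁) / c ≤ auxF c t₂ σ - auxF c t₁ σ ∧ auxF c t₂ σ - auxF c t₁ σ ≤ 2 * (t₂ - t₁) := by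
  have hc0 : (0:ℝ) < c := by linarith
  have hi0 : (0:ℝ) < c⁻¹ := by positivity
  have hci : c * c⁻¹ = 1 := mul_inv_cancel₀ (ne_of_gt hc0)
  have hi1 : c⁻¹ ≤ 1 := by nlinarith
  have hp0 : 0 ≤ (1 + σ) * c⁻¹ := by positivity
  have hp1 : (1 + σ) * c⁻¹ ≤ 1 := by nlinarith
  rcases le_or_gt t₂ 1 with h2 | h2
  · rw [auxF_low h2, auxF_low (h.trans h2)]
    simp only [div_eq_mul_inv]
    constructor <;> nlinarith [mul_nonneg (sub_nonneg.2 h) (by linarith : (0:ℝ) ≤ 1 - c⁻¹)]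
  · rcases le_or_gt t₂ 2 with h2' | h2'
    · rw [auxF_mid h2 h2']
      rcases le_or_gt t₁ 1 with h1 | h1
      · rw [auxF_low h1]
        simp only [div_eq_mul_inv]
        constructor <;>
          nlinarith [mul_nonneg (sub_nonneg.2 h2.le) (by linarith : (0:ℝ) ≤ 2 - (1 + σ) * c⁻¹ - c⁻¹),
            mul_nonneg (sub_nonneg.2 h1) (by linarith : (0:ℝ) ≤ 1 - c⁻¹),
            mul_nonneg (sub_nonneg.2 h2.le) hp0]
      · rw [auxF_mid h1 (by linarith)]
        simp only [div_eq_mul_inv]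
        constructor <;>
          nlinarith [mul_nonneg (sub_nonneg.2 h) (by linarith : (0:ℝ) ≤ 2 - (1 + σ) * c⁻¹ - c⁻¹),
            mul_nonneg (sub_nonneg.2 h) hp0]
    · rw [auxF_high h2']
      rcases le_or_gt t₁ 1 with h1 | h1
      · rw [auxF_low h1]
        simp only [div_eq_mul_inv]
        have hσi : σ * c⁻¹ ≤ 1 - c⁻¹ := by nlinarith [mul_le_mul_of_nonneg_right hσ2 hi0.le]
        constructor <;>
          nlinarith [mul_nonneg (by linarith : (0:ℝ) ≤ t₂ - 2) (by linarith : (0:ℝ) ≤ 1 - c⁻¹),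
            mul_nonneg (sub_nonneg.2 h1) (by linarith : (0:ℝ) ≤ 2 - c⁻¹),
            mul_nonneg hσ1 hi0.le]
      · rcases le_or_gt t₁ 2 with h1' | h1'
        · rw [auxF_mid h1 h1']
          simp only [div_eq_mul_inv]
          constructor <;>
            nlinarith [mul_nonneg (by linarith : (0:ℝ) ≤ t₂ - 2) (by linarith : (0:ℝ) ≤ 1 - c⁻¹),
              mul_nonneg (by linarith : (0:ℝ) ≤ 2 - t₁)
                (by linarith : (0:ℝ) ≤ 2 - (1 + σ) * c⁻¹ - c⁻¹),
              mul_nonneg (by linarith : (0:ℝ) ≤ 2 - t₁) hp0]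
        · rw [auxF_high h1']
          simp only [div_eq_mul_inv]
          constructor <;>
            nlinarith [mul_nonneg (sub_nonneg.2 h) (by linarith : (0:ℝ) ≤ 1 - c⁻¹)]

lemma auxF_lip_t {c σ : ℝ} (hc : 1 < c) (hσ1 : 0 ≤ σ) (hσ2 : σ ≤ c - 1) (t₁ t₂ : ℝ) :
    |auxF c t₁ σ - auxF c t₂ σ| ≤ 2 * |t₁ - t₂| := by
  have hc0 : (0:ℝ) < c := by linarith
  wlog h : t₂ ≤ t₁ generalizing t₁ t₂
  · rw [abs_sub_comm, abs_sub_comm t₁ t₂]; exact this t₂ t₁ (by linarith)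
  obtain ⟨hb1, hb2⟩ := auxF_mono_bounds hc hσ1 hσ2 h
  have h0 : 0 ≤ (t₁ - t₂) / c := div_nonneg (by linarith) hc0.le
  rw [abs_of_nonneg (by linarith), abs_of_nonneg (by linarith)]
  linarith

lemma auxF_expand_t {c σ : ℝ} (hc : 1 < c) (hσ1 : 0 ≤ σ) (hσ2 : σ ≤ c - 1) (t₁ t₂ : ℝ) :
    |t₁ - t₂| ≤ c * |auxF c t₁ σ - auxF c t₂ σ| := by
  have hc0 : (0:ℝ) < c := by linarith
  wlog h : t₂ ≤ t₁ generalizing t₁ t₂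
  · rw [abs_sub_comm, abs_sub_comm (auxF c t₁ σ)]; exact this t₂ t₁ (by linarith)
  obtain ⟨hb1, hb2⟩ := auxF_mono_bounds hc hσ1 hσ2 h
  have h0 : 0 ≤ (t₁ - t₂) / c := div_nonneg (by linarith) hc0.le
  rw [abs_of_nonneg (by linarith), abs_of_nonneg (by linarith)]
  have := (div_le_iff₀ hc0).1 hb1
  linarith [this]

lemma auxF_lip_σ {c t : ℝ} (hc : 1 < c) (σ₁ σ₂ : ℝ) :
    |auxF c t σ₁ - auxF c t σ₂| ≤ |σ₁ - σ₂| := by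
  have hc0 : (0:ℝ) < c := by linarith
  rcases le_or_gt t 1 with h1 | h1
  · rw [auxF_low h1, auxF_low h1, div_sub_div_same, show t + σ₁ - (t + σ₂) = σ₁ - σ₂ by ring,
      abs_div, abs_of_pos hc0]
    exact div_le_self (abs_nonneg _) hc.le
  · rcases le_or_gt t 2 with h2 | h2
    · rw [auxF_mid h1 h2, auxF_mid h1 h2,
        show (1 + σ₁) / c + (t - 1) * (2 - (1 + σ₁) / c) -
          ((1 + σ₂) / c + (t - 1) * (2 - (1 + σ₂) / c)) = (σ₁ - σ₂) * (2 - t) / c by ring,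
        abs_div, abs_mul, abs_of_pos hc0, abs_of_nonneg (by linarith : (0:ℝ) ≤ 2 - t)]
      calc |σ₁ - σ₂| * (2 - t) / c ≤ |σ₁ - σ₂| * 1 / c := by gcongr; linarith
        _ ≤ |σ₁ - σ₂| := by rw [mul_one]; exact div_le_self (abs_nonneg _) hc.le
    · rw [auxF_high h2, auxF_high h2, sub_self, abs_zero]
      exact abs_nonneg _

lemma min_lip (a b k : ℝ) : |min a k - min b k| ≤ |a - b| := by
  have h1 : min a k ≤ min b k + |a - b| := by
    refine le_trans (min_le_min (by linarith [le_abs_self (a - b)])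
      (by linarith [abs_nonneg (a - b)]) : min a k ≤ min (b + |a - b|) (k + |a - b|)) ?_
    rw [min_add_add_right]
  have h2 : min b k ≤ min a k + |a - b| := by
    refine le_trans (min_le_min (by linarith [neg_abs_le (a - b)])
      (by linarith [abs_nonneg (a - b)]) : min b k ≤ min (a + |a - b|) (k + |a - b|)) ?_
    rw [min_add_add_right]
  rw [abs_sub_le_iff]
  constructor <;> linarith

/-- The global bi-Lipschitz change of variables. -/
def cuspF (n : ℕ) (c : ℝ) : Rn n → Rn n :=
  fun z => (auxF c z.1 (min ‖z.2‖ (c - 1)), z.2)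

/-- Its inverse. -/
def cuspG (n : ℕ) (c : ℝ) : Rn n → Rn n :=
  fun z => (auxG c z.1 (min ‖z.2‖ (c - 1)), z.2)

lemma cuspF_fst {n : ℕ} {c : ℝ} (z : Rn n) :
    (cuspF n c z).1 = auxF c z.1 (min ‖z.2‖ (c - 1)) := rfl

lemma cuspF_snd {n : ℕ} {c : ℝ} (z : Rn n) : (cuspF n c z).2 = z.2 := rfl

lemma cuspG_fst {n : ℕ} {c : ℝ} (z : Rn n) :
    (cuspG n c z).1 = auxG c z.1 (min ‖z.2‖ (c - 1)) := rfl

lemma cuspG_snd {n : ℕ} {c : ℝ} (z : Rn n) : (cuspG n c z).2 = z.2 := rfl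

/-- an arbitrary outward cuspidal domain is globally bi-Lipschitz
equivalent to the associated Lipschitz outward cuspidal domain. -/
theorem statement10 (n : ℕ) (ψ ψhat : ℝ → ℝ) (hψ : IsCuspidal ψ)
    (hhat : IsAssociatedHat ψ ψhat) :
    ∃ O : Rn n → Rn n, Function.Bijective O ∧
      (∃ K : ℝ≥0, LipschitzWith K O) ∧
      (∃ K : ℝ≥0, LipschitzWith K (Function.invFun O)) ∧
      O '' cuspDomain n ψ = cuspDomain n ψhat := by
  classical
  obtain ⟨hpair, hhat1⟩ := hhat
  have hψ1 : 0 < ψ 1 := hψ.pos 1 ⟨one_pos, le_rfl⟩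
  set c : ℝ := 1 + ψ 1 with hcdef
  have hc : 1 < c := by simp only [hcdef]; linarith
  have hc0 : (0:ℝ) < c := by linarith
  have hcψ : c - 1 = ψ 1 := by simp only [hcdef]; ring
  have hσ0 : ∀ x : EuclideanSpace ℝ (Fin (n - 1)), 0 ≤ min ‖x‖ (c - 1) :=
    fun x => le_min (norm_nonneg x) (by linarith)
  have hσc : ∀ x : EuclideanSpace ℝ (Fin (n - 1)), min ‖x‖ (c - 1) ≤ c - 1 :=
    fun x => min_le_right _ _
  have hσeq : ∀ s : ℝ, s < ψ 1 → min s (c - 1) = s :=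
    fun s hs => min_eq_left (by rw [hcψ]; exact hs.le)
  have hO'O : ∀ z, cuspG n c (cuspF n c z) = z := by
    intro z
    have : cuspG n c (cuspF n c z) =
        (auxG c (auxF c z.1 (min ‖z.2‖ (c - 1))) (min ‖z.2‖ (c - 1)), z.2) := rfl
    rw [this, auxG_auxF hc (hσ0 _) (hσc _)]
  have hOO' : ∀ z, cuspF n c (cuspG n c z) = z := by
    intro z
    have : cuspF n c (cuspG n c z) =
        (auxF c (auxG c z.1 (min ‖z.2‖ (c - 1))) (min ‖z.2‖ (c - 1)), z.2) := rfl
    rw [this, auxF_auxG hc (hσ0 _) (hσc _)]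
  have hinj : Function.Injective (cuspF n c) := Function.LeftInverse.injective hO'O
  have hbij : Function.Bijective (cuspF n c) := ⟨hinj, Function.RightInverse.surjective hOO'⟩
  -- right-limit facts
  have hbdd : ∀ t' : ℝ, 0 < t' → BddBelow (ψ '' Set.Ioc t' 1) := by
    intro t' ht'
    refine ⟨0, ?_⟩
    rintro y ⟨u, hu, rfl⟩
    exact (hψ.pos u ⟨ht'.trans hu.1, hu.2⟩).le
  have hRL_le : ∀ t' u : ℝ, 0 < t' → t' < u → u ≤ 1 → rightLimAt ψ t' ≤ ψ u :=
    fun t' u h0 h1 h2 => csInf_le (hbdd t' h0) ⟨u, ⟨h1, h2⟩, rfl⟩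
  have hub : ∀ τ ∈ Set.Ioo (0:ℝ) 1, ψhat τ ≤ ψ 1 := by
    intro τ hτ
    obtain ⟨t', hp⟩ := hpair τ hτ
    exact hp.2.2.2.2.1.trans (hRL_le t' 1 hp.1 hp.2.1 le_rfl)
  have hsum : ∀ τ ∈ Set.Ioo (0:ℝ) 1, ∀ t' r, IsHatPair ψ τ t' r → t' + r = c * τ := by
    intro τ _ t' r hp
    rw [hp.2.2.2.2.2, hcdef]
  -- key lemmas relating ψ and ψhat
  have keyA : ∀ t s : ℝ, 0 < t → t ≤ 1 → 0 ≤ s → s < ψ t → s < ψhat ((t + s) / c) := by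
    intro t s ht0 ht1 hs0 hs
    have hψt1 : ψ t ≤ ψ 1 := hψ.mono ⟨ht0, ht1⟩ ⟨one_pos, le_rfl⟩ ht1
    have hτ : (t + s) / c ∈ Set.Ioo (0:ℝ) 1 :=
      ⟨div_pos (by linarith) hc0, (div_lt_one hc0).2 (by simp only [hcdef]; linarith)⟩
    obtain ⟨t', hp⟩ := hpair _ hτ
    have hs' := hsum _ hτ _ _ hp
    rw [mul_div_cancel₀ _ (ne_of_gt hc0)] at hs'
    by_contra hle
    push_neg at hle
    have htt' : t ≤ t' := by linarith
    have hmono : ψ t ≤ ψ t' := hψ.mono ⟨ht0, ht1⟩ ⟨by linarith, hp.2.1.le⟩ htt'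
    linarith [hp.2.2.2.1]
  have keyA' : ∀ s τ : ℝ, 0 ≤ s → τ ∈ Set.Ioo (0:ℝ) 1 → 1 + s ≤ c * τ → s < ψhat τ := by
    intro s τ hs0 hτ hcs
    obtain ⟨t', hp⟩ := hpair τ hτ
    have hs' := hsum _ hτ _ _ hp
    linarith [hp.2.1]
  have keyB : ∀ s τ : ℝ, 0 ≤ s → τ ∈ Set.Ioo (0:ℝ) 1 → s < ψhat τ → c * τ ≤ 1 + s →
      (0 < c * τ - s ∧ c * τ - s ≤ 1 ∧ s < ψ (c * τ - s)) := by
    intro s τ hs0 hτ hsψ hcs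
    obtain ⟨t', hp⟩ := hpair τ hτ
    have hs' := hsum _ hτ _ _ hp
    have ht0 : 0 < c * τ - s := by linarith [hp.1]
    have ht1 : c * τ - s ≤ 1 := by linarith
    refine ⟨ht0, ht1, ?_⟩
    have hRL := hRL_le t' (c * τ - s) hp.1 (by linarith) ht1
    linarith [hp.2.2.2.2.1]
  -- Lipschitz bounds
  have hlipO : LipschitzWith 3 (cuspF n c) := by
    apply LipschitzWith.of_dist_le_mul
    intro z₁ z₂
    have h1 : |auxF c z₁.1 (min ‖z₁.2‖ (c-1)) - auxF c z₂.1 (min ‖z₂.2‖ (c-1))| ≤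
        2 * dist z₁.1 z₂.1 + dist z₁.2 z₂.2 := by
      have e1 := auxF_lip_t hc (hσ0 z₁.2) (hσc z₁.2) z₁.1 z₂.1
      have e2 := auxF_lip_σ (t := z₂.1) hc (min ‖z₁.2‖ (c-1)) (min ‖z₂.2‖ (c-1))
      have e3 := min_lip (‖z₁.2‖) (‖z₂.2‖) (c - 1)
      have e4 : |‖z₁.2‖ - ‖z₂.2‖| ≤ ‖z₁.2 - z₂.2‖ := abs_norm_sub_norm_le _ _
      have e5 : dist z₁.2 z₂.2 = ‖z₁.2 - z₂.2‖ := dist_eq_norm _ _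
      calc |auxF c z₁.1 (min ‖z₁.2‖ (c-1)) - auxF c z₂.1 (min ‖z₂.2‖ (c-1))|
          ≤ |auxF c z₁.1 (min ‖z₁.2‖ (c-1)) - auxF c z₂.1 (min ‖z₁.2‖ (c-1))| +
            |auxF c z₂.1 (min ‖z₁.2‖ (c-1)) - auxF c z₂.1 (min ‖z₂.2‖ (c-1))| :=
            abs_sub_le _ _ _
        _ ≤ 2 * |z₁.1 - z₂.1| + ‖z₁.2 - z₂.2‖ := by linarith
        _ = 2 * dist z₁.1 z₂.1 + dist z₁.2 z₂.2 := by rw [Real.dist_eq, e5]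
    have hd1 : dist z₁.1 z₂.1 ≤ max (dist z₁.1 z₂.1) (dist z₁.2 z₂.2) := le_max_left _ _
    have hd2 : dist z₁.2 z₂.2 ≤ max (dist z₁.1 z₂.1) (dist z₁.2 z₂.2) := le_max_right _ _
    have hd0 : 0 ≤ dist z₁.2 z₂.2 := dist_nonneg
    rw [Prod.dist_eq (x := cuspF n c z₁), Prod.dist_eq (x := z₁)]
    rw [cuspF_fst, cuspF_fst, cuspF_snd, cuspF_snd]
    apply max_le
    · push_cast
      rw [Real.dist_eq]
      calc |auxF c z₁.1 (min ‖z₁.2‖ (c-1)) - auxF c z₂.1 (min ‖z₂.2‖ (c-1))|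
          ≤ 2 * dist z₁.1 z₂.1 + dist z₁.2 z₂.2 := h1
        _ ≤ 3 * max (dist z₁.1 z₂.1) (dist z₁.2 z₂.2) := by linarith
    · push_cast
      nlinarith [le_trans hd0 hd2]
  have h2c : (0:ℝ) ≤ 2 * c := by positivity
  have hlipO' : LipschitzWith ⟨2 * c, h2c⟩ (cuspG n c) := by
    apply LipschitzWith.of_dist_le_mul
    intro z₁ z₂
    set σ₁ := min ‖z₁.2‖ (c - 1) with hσ₁
    set σ₂ := min ‖z₂.2‖ (c - 1) with hσ₂
    have h1 : |auxG c z₁.1 σ₁ - auxG c z₂.1 σ₂| ≤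
        c * dist z₁.1 z₂.1 + c * dist z₁.2 z₂.2 := by
      have e1 : |auxG c z₁.1 σ₁ - auxG c z₂.1 σ₁| ≤ c * |z₁.1 - z₂.1| := by
        have := auxF_expand_t hc (hσ0 z₁.2) (hσc z₁.2) (auxG c z₁.1 σ₁) (auxG c z₂.1 σ₁)
        rwa [auxF_auxG hc (hσ0 z₁.2) (hσc z₁.2), auxF_auxG hc (hσ0 z₁.2) (hσc z₁.2)] at this
      have e2 : |auxG c z₂.1 σ₁ - auxG c z₂.1 σ₂| ≤ c * |σ₁ - σ₂| := by
        have h := auxF_expand_t hc (hσ0 z₂.2) (hσc z₂.2) (auxG c z₂.1 σ₁) (auxG c z₂.1 σ₂)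
        rw [auxF_auxG hc (hσ0 z₂.2) (hσc z₂.2)] at h
        have h3 : auxF c (auxG c z₂.1 σ₁) σ₁ = z₂.1 := auxF_auxG hc (hσ0 z₁.2) (hσc z₁.2) _
        have h4 := auxF_lip_σ (t := auxG c z₂.1 σ₁) hc σ₂ σ₁
        rw [h3] at h4
        calc |auxG c z₂.1 σ₁ - auxG c z₂.1 σ₂|
            ≤ c * |auxF c (auxG c z₂.1 σ₁) σ₂ - z₂.1| := h
          _ ≤ c * |σ₂ - σ₁| := by
              nlinarith [abs_nonneg (auxF c (auxG c z₂.1 σ₁) σ₂ - z₂.1)]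
          _ = c * |σ₁ - σ₂| := by rw [abs_sub_comm]
      have e3 : |σ₁ - σ₂| ≤ ‖z₁.2 - z₂.2‖ :=
        le_trans (min_lip _ _ _) (abs_norm_sub_norm_le _ _)
      have e5 : dist z₁.2 z₂.2 = ‖z₁.2 - z₂.2‖ := dist_eq_norm _ _
      calc |auxG c z₁.1 σ₁ - auxG c z₂.1 σ₂|
          ≤ |auxG c z₁.1 σ₁ - auxG c z₂.1 σ₁| + |auxG c z₂.1 σ₁ - auxG c z₂.1 σ₂| :=
            abs_sub_le _ _ _
        _ ≤ c * |z₁.1 - z₂.1| + c * |σ₁ - σ₂| := by linarith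
        _ ≤ c * dist z₁.1 z₂.1 + c * dist z₁.2 z₂.2 := by
            rw [Real.dist_eq, e5]
            nlinarith
    have hd1 : dist z₁.1 z₂.1 ≤ max (dist z₁.1 z₂.1) (dist z₁.2 z₂.2) := le_max_left _ _
    have hd2 : dist z₁.2 z₂.2 ≤ max (dist z₁.1 z₂.1) (dist z₁.2 z₂.2) := le_max_right _ _
    have hd0 : 0 ≤ dist z₁.2 z₂.2 := dist_nonneg
    show dist (cuspG n c z₁) (cuspG n c z₂) ≤ 2 * c * dist z₁ z₂
    rw [Prod.dist_eq (x := cuspG n c z₁), Prod.dist_eq (x := z₁)]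
    rw [cuspG_fst, cuspG_fst, cuspG_snd, cuspG_snd]
    apply max_le
    · rw [Real.dist_eq]
      calc |auxG c z₁.1 σ₁ - auxG c z₂.1 σ₂|
          ≤ c * dist z₁.1 z₂.1 + c * dist z₁.2 z₂.2 := h1
        _ ≤ 2 * c * max (dist z₁.1 z₂.1) (dist z₁.2 z₂.2) := by nlinarith
    · nlinarith [le_trans hd0 hd2]
  have hinvO : Function.invFun (cuspF n c) = cuspG n c := by
    funext y
    apply hinj
    rw [Function.invFun_eq ⟨cuspG n c y, hOO' y⟩, hOO' y]
  refine ⟨cuspF n c, hbij, ⟨3, hlipO⟩, ⟨⟨2 * c, h2c⟩, by rw [hinvO]; exact hlipO'⟩, ?_⟩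
  -- image equality
  apply Set.Subset.antisymm
  · rintro w ⟨⟨t, x⟩, hz, rfl⟩
    simp only [cuspDomain, Set.mem_union, Set.mem_setOf_eq] at hz ⊢
    rw [cuspF_fst, cuspF_snd]
    rcases hz with ⟨ht, hs⟩ | ⟨ht, hs⟩
    · -- cusp part
      have hψt1 : ψ t ≤ ψ 1 := hψ.mono ht ⟨one_pos, le_rfl⟩ ht.2
      have hsψ1 : ‖x‖ < ψ 1 := lt_of_lt_of_le hs hψt1
      have hσx : min ‖(t, x).2‖ (c - 1) = ‖x‖ := hσeq _ hsψ1
      rw [hσx]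
      have hOz1 : auxF c (t, x).1 ‖x‖ = (t + ‖x‖) / c := auxF_low ht.2
      rw [hOz1]
      left
      refine ⟨⟨div_pos (by linarith [ht.1, norm_nonneg x]) hc0, ?_⟩, ?_⟩
      · apply le_of_lt
        rw [div_lt_one hc0]
        simp only [hcdef]; linarith [ht.2, hsψ1]
      · exact keyA t ‖x‖ ht.1 ht.2 (norm_nonneg x) hs
    · -- cylinder part
      have hσx : min ‖(t, x).2‖ (c - 1) = ‖x‖ := hσeq _ hs
      rw [hσx]
      rcases eq_or_lt_of_le ht.1 with heq | h1
      · -- t = 1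
        have hτval : auxF c (t, x).1 ‖x‖ = (1 + ‖x‖) / c := by
          rw [show (t, x).1 = t from rfl, ← heq, auxF_low le_rfl]
        rw [hτval]
        have hτ1 : (1 + ‖x‖) / c < 1 := by rw [div_lt_one hc0]; simp only [hcdef]; linarith
        have hτ0 : 0 < (1 + ‖x‖) / c := div_pos (by linarith [norm_nonneg x]) hc0
        have hcτ : 1 + ‖x‖ ≤ c * ((1 + ‖x‖) / c) := by
          rw [mul_div_cancel₀ _ (ne_of_gt hc0)]
        left
        exact ⟨⟨hτ0, hτ1.le⟩, keyA' ‖x‖ _ (norm_nonneg x) ⟨hτ0, hτ1⟩ hcτ⟩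
      · -- 1 < t < 2
        have hp1 : (1 + ‖x‖) / c ≤ 1 := by rw [div_le_one hc0]; simp only [hcdef]; linarith
        have hp0 : 0 < (1 + ‖x‖) / c := div_pos (by linarith [norm_nonneg x]) hc0
        have hτval : auxF c (t, x).1 ‖x‖ = (1 + ‖x‖) / c + (t - 1) * (2 - (1 + ‖x‖) / c) :=
          auxF_mid h1 ht.2.le
        rw [hτval]
        set τ := (1 + ‖x‖) / c + (t - 1) * (2 - (1 + ‖x‖) / c) with hτdef
        have hτlb : (1 + ‖x‖) / c ≤ τ := by rw [hτdef]; nlinarith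
        have hτ0 : 0 < τ := lt_of_lt_of_le hp0 hτlb
        have hτ2 : τ < 2 := by rw [hτdef]; nlinarith [ht.2]
        have hcτ : 1 + ‖x‖ ≤ c * τ := by
          have := (div_le_iff₀ hc0).1 hτlb
          linarith
        rcases le_or_gt 1 τ with hτge | hτlt
        · right
          rw [hhat1]
          exact ⟨⟨hτge, hτ2⟩, hs⟩
        · left
          exact ⟨⟨hτ0, hτlt.le⟩, keyA' ‖x‖ τ (norm_nonneg x) ⟨hτ0, hτlt⟩ hcτ⟩
  · intro w hw
    refine ⟨cuspG n c w, ?_, hOO' w⟩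
    obtain ⟨τ, x⟩ := w
    simp only [cuspDomain, Set.mem_union, Set.mem_setOf_eq] at hw ⊢
    have hsψ1 : ‖x‖ < ψ 1 := by
      rcases hw with ⟨hτ, hs⟩ | ⟨hτ, hs⟩
      · rcases eq_or_lt_of_le hτ.2 with heq | hlt
        · rw [heq, hhat1] at hs; exact hs
        · exact lt_of_lt_of_le hs (hub τ ⟨hτ.1, hlt⟩)
      · rw [hhat1] at hs; exact hs
    rw [cuspG_fst, cuspG_snd]
    have hσx : min ‖(τ, x).2‖ (c - 1) = ‖x‖ := hσeq _ hsψ1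
    rw [hσx]
    rcases le_or_gt τ ((1 + ‖x‖) / c) with h | h
    · -- land in the cusp part
      have hτ1 : τ < 1 := lt_of_le_of_lt h
        (by rw [div_lt_one hc0]; simp only [hcdef]; linarith)
      have hw' : τ ∈ Set.Ioo (0:ℝ) 1 ∧ ‖x‖ < ψhat τ := by
        rcases hw with ⟨hτ, hs⟩ | ⟨hτ, hs⟩
        · exact ⟨⟨hτ.1, hτ1⟩, hs⟩
        · exact absurd hτ.1 (by simp only [not_le]; linarith)
      have hcτ : c * τ ≤ 1 + ‖x‖ := by
        have := (le_div_iff₀ hc0).1 h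
        linarith
      have htval : auxG c (τ, x).1 ‖x‖ = c * τ - ‖x‖ := auxG_low h
      rw [htval]
      obtain ⟨hB1, hB2, hB3⟩ := keyB ‖x‖ τ (norm_nonneg x) hw'.1 hw'.2 hcτ
      left
      exact ⟨⟨hB1, hB2⟩, hB3⟩
    · -- land in the cylinder part
      have hτ2 : τ < 2 := by
        rcases hw with ⟨hτ, _⟩ | ⟨hτ, _⟩
        · linarith [hτ.2]
        · exact hτ.2
      have hden : (0:ℝ) < 2 * c - 1 - ‖x‖ := by simp only [hcdef]; linarith
      have htval : auxG c (τ, x).1 ‖x‖ = 1 + (τ - (1 + ‖x‖) / c) * c / (2 * c - 1 - ‖x‖) :=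
        auxG_mid h hτ2.le
      rw [htval]
      have ht1 : (1:ℝ) ≤ 1 + (τ - (1 + ‖x‖) / c) * c / (2 * c - 1 - ‖x‖) := by
        have : 0 ≤ (τ - (1 + ‖x‖) / c) * c / (2 * c - 1 - ‖x‖) :=
          div_nonneg (mul_nonneg (by linarith) hc0.le) hden.le
        linarith
      have ht2 : 1 + (τ - (1 + ‖x‖) / c) * c / (2 * c - 1 - ‖x‖) < 2 := by
        have hlt : (τ - (1 + ‖x‖) / c) * c / (2 * c - 1 - ‖x‖) < 1 := by
          rw [div_lt_one hden, sub_mul, div_mul_cancel₀ _ (ne_of_gt hc0)]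
          nlinarith [mul_pos (sub_pos.2 hτ2) hc0]
        linarith
      right
      exact ⟨⟨ht1, ht2⟩, hsψ1⟩
end
end

section
/- Let ψ : (0,1] → (0,∞) be a cuspidal function such that t ↦ ψ(t)/t is nondecreasing on (0,1] with lim_{t→0} ψ(t)/t = 0, and let ψ̂ be the associated Lipschitz cuspidal function (ψ̂(t̂) = r_{t̂}, where ψ(t_{t̂}) ≤ r_{t̂} ≤ lim_{s→t_{t̂}⁺} ψ(s) and t_{t̂} + r_{t̂} = (1+ψ(1)) t̂). Then the function t̂ ↦ ψ̂(t̂)/t̂ is nondecreasing on (0,1) and lim_{t̂→0} ψ̂(t̂)/t̂ = 0. -/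
open MeasureTheory Set Filter Topology
open scoped ENNReal NNReal

noncomputable section

/-- Auxiliary: if `r / s ≤ c` for all `s ∈ (t, u]` with `0 < t < u`, then `r / t ≤ c`. -/
lemma aux_div_le (t r u c : ℝ) (ht : 0 < t) (htu : t < u)
    (h : ∀ s ∈ Set.Ioc t u, r / s ≤ c) : r / t ≤ c := by
  have htt : Tendsto (fun s : ℝ => r / s) (𝓝[>] t) (𝓝 (r / t)) :=
    (tendsto_const_nhds.div tendsto_id (ne_of_gt ht)).mono_left nhdsWithin_le_nhds
  exact le_of_tendsto htt (eventually_of_mem (Ioc_mem_nhdsGT_of_mem ⟨le_refl t, htu⟩) h)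

lemma rightLimAt_le (ψ : ℝ → ℝ) (hψ : IsCuspidal ψ) (t : ℝ) (ht : 0 < t)
    (s : ℝ) (hs : s ∈ Set.Ioc t 1) : rightLimAt ψ t ≤ ψ s := by
  apply csInf_le
  · refine ⟨0, ?_⟩
    rintro y ⟨s', hs', rfl⟩
    exact le_of_lt (hψ.pos s' ⟨lt_trans ht hs'.1, hs'.2⟩)
  · exact ⟨s, hs, rfl⟩

/-- Auxiliary ratio comparison: `r₁/t₁ ≤ r₂/t₂` for hat pairs with `t̂₁ ≤ t̂₂`. -/
lemma ratio_mono (ψ : ℝ → ℝ) (hψ : IsCuspidal ψ)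
    (hmono : MonotoneOn (fun t => ψ t / t) (Set.Ioc 0 1))
    (a b t1 r1 t2 r2 : ℝ) (hab : a ≤ b)
    (h1 : IsHatPair ψ a t1 r1) (h2 : IsHatPair ψ b t2 r2) :
    r1 / t1 ≤ r2 / t2 := by
  obtain ⟨ht1, ht1', hr1, hψr1, hr1lim, hsum1⟩ := h1
  obtain ⟨ht2, ht2', hr2, hψr2, hr2lim, hsum2⟩ := h2
  have hψ1 : 0 < ψ 1 := hψ.pos 1 ⟨one_pos, le_refl 1⟩
  have hsumle : t1 + r1 ≤ t2 + r2 := by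
    rw [hsum1, hsum2]
    nlinarith
  rcases lt_trichotomy t1 t2 with h | h | h
  · -- t1 < t2
    have key : r1 / t1 ≤ ψ t2 / t2 := by
      apply aux_div_le t1 r1 t2 _ ht1 h
      intro s hs
      have hs1 : s ∈ Set.Ioc t1 1 := ⟨hs.1, hs.2.trans ht2'.le⟩
      have h1 : r1 ≤ ψ s := hr1lim.trans (rightLimAt_le ψ hψ t1 ht1 s hs1)
      have hspos : 0 < s := lt_trans ht1 hs.1
      calc r1 / s ≤ ψ s / s := by
            exact div_le_div_of_nonneg_right h1 hspos.le
        _ ≤ ψ t2 / t2 := hmono ⟨hspos, hs1.2⟩ ⟨ht2, ht2'.le⟩ hs.2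
    exact key.trans (div_le_div_of_nonneg_right hψr2 ht2.le)
  · -- t1 = t2
    subst h
    have : r1 ≤ r2 := by linarith
    exact div_le_div_of_nonneg_right this ht1.le
  · -- t2 < t1
    have hr12 : r1 ≤ r2 := by linarith
    calc r1 / t1 ≤ r1 / t2 := div_le_div_of_nonneg_left hr1.le ht2 h.le
      _ ≤ r2 / t2 := div_le_div_of_nonneg_right hr12 ht2.le

/-- `t̂ ↦ ψ̂(t̂)/t̂` is nondecreasing on `(0,1)` and tends to `0` at `0⁺`. -/
theorem statement11 (ψ ψhat : ℝ → ℝ) (hψ : IsCuspidal ψ)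
    (hmono : MonotoneOn (fun t => ψ t / t) (Set.Ioc 0 1))
    (hlim : Tendsto (fun t => ψ t / t) (𝓝[>] (0:ℝ)) (𝓝 0))
    (hhat : IsAssociatedHat ψ ψhat) :
    MonotoneOn (fun t => ψhat t / t) (Set.Ioo 0 1) ∧
      Tendsto (fun t => ψhat t / t) (𝓝[>] (0:ℝ)) (𝓝 0) := by
  have hψ1 : 0 < ψ 1 := hψ.pos 1 ⟨one_pos, le_refl 1⟩
  constructor
  · intro a ha b hb hab
    obtain ⟨t1, ht1, ht1', hr1, hψr1, hr1lim, hsum1⟩ := hhat.1 a ha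
    obtain ⟨t2, ht2, ht2', hr2, hψr2, hr2lim, hsum2⟩ := hhat.1 b hb
    have key : ψhat a / t1 ≤ ψhat b / t2 :=
      ratio_mono ψ hψ hmono a b t1 (ψhat a) t2 (ψhat b) hab
        ⟨ht1, ht1', hr1, hψr1, hr1lim, hsum1⟩ ⟨ht2, ht2', hr2, hψr2, hr2lim, hsum2⟩
    have hkey' : ψhat a * t2 ≤ ψhat b * t1 := by
      rwa [div_le_div_iff₀ ht1 ht2] at key
    simp only
    rw [div_le_div_iff₀ ha.1 hb.1]
    nlinarith [mul_pos hr1 hr2, ha.1, hb.1]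
  · rw [Metric.tendsto_nhds]
    intro ε hε
    set ε' : ℝ := ε / (2 * (1 + ψ 1)) with hε'def
    have hε' : 0 < ε' := by positivity
    have hev : (fun s => ψ s / s) ⁻¹' Set.Iio ε' ∈ 𝓝[>] (0:ℝ) :=
      hlim (Iio_mem_nhds hε')
    obtain ⟨δ, hδ, hδsub⟩ := mem_nhdsGT_iff_exists_Ioc_subset.mp hev
    have hδ0 : (0:ℝ) < δ := hδ
    set η : ℝ := min (δ / (1 + ψ 1)) 1 with hηdef
    have hη : 0 < η := lt_min (by positivity) one_pos
    filter_upwards [Ioo_mem_nhdsGT_of_mem ⟨le_refl (0:ℝ), hη⟩] with τ hτ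
    have hτ0 : 0 < τ := hτ.1
    have hτη : τ < η := hτ.2
    have hτ1 : τ < 1 := lt_of_lt_of_le hτη (min_le_right _ _)
    obtain ⟨t, ht, ht', hr, hψr, hrlim, hsum⟩ := hhat.1 τ ⟨hτ0, hτ1⟩
    -- t < δ
    have htδ : t < δ := by
      have : (1 + ψ 1) * τ < (1 + ψ 1) * (δ / (1 + ψ 1)) := by
        apply mul_lt_mul_of_pos_left (lt_of_lt_of_le hτη (min_le_left _ _))
        positivity
      rw [mul_div_cancel₀ _ (by positivity : (1 + ψ 1) ≠ 0)] at this
      linarith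
    -- r / t ≤ ε'
    have hrt : ψhat τ / t ≤ ε' := by
      apply aux_div_le t (ψhat τ) (min δ 1) _ ht (lt_min htδ ht')
      intro s hs
      have hs1 : s ∈ Set.Ioc t 1 := ⟨hs.1, hs.2.trans (min_le_right _ _)⟩
      have hsδ : s ∈ Set.Ioc (0:ℝ) δ :=
        ⟨lt_trans ht hs.1, hs.2.trans (min_le_left _ _)⟩
      have h1 : ψhat τ ≤ ψ s := hrlim.trans (rightLimAt_le ψ hψ t ht s hs1)
      have hspos : 0 < s := lt_trans ht hs.1
      have h2 : ψ s / s < ε' := hδsub hsδ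
      calc ψhat τ / s ≤ ψ s / s := div_le_div_of_nonneg_right h1 hspos.le
        _ ≤ ε' := h2.le
    have hrεt : ψhat τ * (2 * (1 + ψ 1)) ≤ ε * t := by
      rw [div_le_div_iff₀ ht (by positivity)] at hrt
      linarith [hrt]
    have hfinal : ψhat τ / τ < ε := by
      rw [div_lt_iff₀ hτ0]
      nlinarith [hsum, hr, ht, hε, hψ1]
    rw [Real.dist_eq, sub_zero, abs_of_pos (div_pos hr hτ0)]
    exact hfinal
end
end

section
/- Let ψ : (0,1] → (0,∞) be a cuspidal function with t ↦ ψ(t)/t nondecreasing and lim_{t→0} ψ(t)/t = 0, let ψ̂ be the associated Lipschitz cuspidal function (ψ̂(t̂) = r_{t̂}, where ψ(t_{t̂}) ≤ r_{t̂} ≤ lim_{s→t_{t̂}⁺} ψ(s) and t_{t̂} + r_{t̂} = (1+ψ(1)) t̂), let n ≥ 2 and 1 < s < ∞. If ∫₀¹ (tˢ/ψ(t))^{n/(s-1)} dt/t < ∞, then also ∫₀¹ (t̂ˢ/ψ̂(t̂))^{n/(s-1)} dt̂/t̂ < ∞. -/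
open MeasureTheory Set Filter Topology
open scoped ENNReal NNReal

noncomputable section

/-- the integrability condition transfers from `ψ` to `ψ̂`. -/
theorem statement12 (ψ ψhat : ℝ → ℝ) (hψ : IsCuspidal ψ)
    (hmono : MonotoneOn (fun t => ψ t / t) (Set.Ioc 0 1))
    (hlim : Tendsto (fun t => ψ t / t) (𝓝[>] (0:ℝ)) (𝓝 0))
    (hhat : IsAssociatedHat ψ ψhat)
    (n : ℕ) (hn : 2 ≤ n) (s : ℝ) (hs : 1 < s)
    (hint : IntegrableOn (fun t => (t ^ s / ψ t) ^ ((n : ℝ) / (s - 1)) / t) (Set.Ioc 0 1)) :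
    IntegrableOn (fun t => (t ^ s / ψhat t) ^ ((n : ℝ) / (s - 1)) / t) (Set.Ioc 0 1) := by
  
  have hψ1 : 0 < ψ 1 := hψ.pos 1 ⟨one_pos, le_refl 1⟩
  have h1ψ : (0:ℝ) < 1 + ψ 1 := by linarith
  set α : ℝ := (n : ℝ) / (s - 1) with hαdef
  have hα : 0 ≤ α := div_nonneg (by positivity) (by linarith)
  -- linear bound ψ u ≤ ψ 1 * u on (0,1]
  have hlin : ∀ u ∈ Set.Ioc (0:ℝ) 1, ψ u ≤ ψ 1 * u := by
    intro u hu
    have h := hmono hu ⟨one_pos, le_refl 1⟩ hu.2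
    simp only [div_one] at h
    rw [div_le_iff₀ hu.1] at h
    linarith
  have hbdd : ∀ t : ℝ, 0 < t → BddBelow (ψ '' Set.Ioc t 1) := by
    intro t ht
    refine ⟨0, ?_⟩
    rintro x ⟨v, hv, rfl⟩
    exact (hψ.pos v ⟨lt_trans ht hv.1, hv.2⟩).le
  -- right limit bound
  have hrl : ∀ t : ℝ, 0 < t → t < 1 → rightLimAt ψ t ≤ ψ 1 * t := by
    intro t ht0 ht1
    refine le_of_forall_pos_le_add ?_
    intro ε hε
    set u := min 1 (t + ε / ψ 1) with hu
    have hu1 : u ≤ 1 := min_le_left _ _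
    have hut : t < u := lt_min ht1 (by have := div_pos hε hψ1; linarith)
    calc rightLimAt ψ t ≤ ψ u := csInf_le (hbdd t ht0) ⟨u, ⟨hut, hu1⟩, rfl⟩
      _ ≤ ψ 1 * u := hlin u ⟨lt_trans ht0 hut, hu1⟩
      _ ≤ ψ 1 * (t + ε / ψ 1) := mul_le_mul_of_nonneg_left (min_le_right _ _) hψ1.le
      _ = ψ 1 * t + ε := by field_simp
  -- key: ψ that ≤ ψhat that and 0 < ψhat that on Ioo 0 1
  have key : ∀ that ∈ Set.Ioo (0:ℝ) 1, ψ that ≤ ψhat that := by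
    intro that hthat
    obtain ⟨t, ht0, ht1, hr0, hψr, hrlim, heq⟩ := hhat.1 that hthat
    have h1 : ψhat that ≤ ψ 1 * t := le_trans hrlim (hrl t ht0 ht1)
    have h2 : (1 + ψ 1) * that ≤ (1 + ψ 1) * t := by linarith
    have h3 : that ≤ t := le_of_mul_le_mul_left h2 h1ψ
    calc ψ that ≤ ψ t := hψ.mono ⟨hthat.1, le_trans h3 ht1.le⟩ ⟨ht0, ht1.le⟩ h3
      _ ≤ ψhat that := hψr
  -- monotonicity of ψhat on Ioo 0 1
  have hmonohat : MonotoneOn ψhat (Set.Ioo 0 1) := by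
    intro a ha b hb hab
    rcases hab.lt_or_eq with hab' | rfl
    · obtain ⟨ta, hta0, hta1, hra0, hψra, hrla, heqa⟩ := hhat.1 a ha
      obtain ⟨tb, htb0, htb1, hrb0, hψrb, hrlb, heqb⟩ := hhat.1 b hb
      rcases le_or_gt tb ta with h | h
      · have : (1 + ψ 1) * a ≤ (1 + ψ 1) * b :=
          mul_le_mul_of_nonneg_left hab h1ψ.le
        linarith
      · have h1 : rightLimAt ψ ta ≤ ψ tb :=
          csInf_le (hbdd ta hta0) ⟨tb, ⟨h, htb1.le⟩, rfl⟩
        linarith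
    · exact le_rfl
  -- measurability
  have hmeas : AEMeasurable ψhat (volume.restrict (Set.Ioc (0:ℝ) 1)) := by
    rw [← Measure.restrict_congr_set Ioo_ae_eq_Ioc]
    exact aemeasurable_restrict_of_monotoneOn measurableSet_Ioo hmonohat
  have m1 : Measurable fun t : ℝ => t ^ s := by fun_prop
  have m2 : Measurable fun x : ℝ => x ^ α := by fun_prop
  have hg : AEMeasurable (fun t => (t ^ s / ψhat t) ^ α / t)
      (volume.restrict (Set.Ioc (0:ℝ) 1)) :=
    (m2.comp_aemeasurable (m1.aemeasurable.div hmeas)).div aemeasurable_id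
  refine MeasureTheory.Integrable.mono hint hg.aestronglyMeasurable ?_
  rw [ae_restrict_iff' measurableSet_Ioc]
  refine ae_of_all _ ?_
  intro t ht
  have ht0 : 0 < t := ht.1
  have hψt : 0 < ψ t := hψ.pos t ht
  rcases ht.2.lt_or_eq with ht1 | rfl
  · have hk : ψ t ≤ ψhat t := key t ⟨ht0, ht1⟩
    have hψh : 0 < ψhat t := lt_of_lt_of_le hψt hk
    have hts : 0 < t ^ s := Real.rpow_pos_of_pos ht0 s
    have hg0 : 0 ≤ (t ^ s / ψhat t) ^ α / t :=
      div_nonneg (Real.rpow_nonneg (div_nonneg hts.le hψh.le) α) ht0.le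
    have hf0 : 0 ≤ (t ^ s / ψ t) ^ α / t :=
      div_nonneg (Real.rpow_nonneg (div_nonneg hts.le hψt.le) α) ht0.le
    rw [Real.norm_eq_abs, Real.norm_eq_abs, abs_of_nonneg hg0, abs_of_nonneg hf0]
    have h1 : t ^ s / ψhat t ≤ t ^ s / ψ t :=
      div_le_div_of_nonneg_left hts.le hψt hk
    have h2 : (t ^ s / ψhat t) ^ α ≤ (t ^ s / ψ t) ^ α :=
      Real.rpow_le_rpow (div_nonneg hts.le hψh.le) h1 hα
    exact div_le_div_of_nonneg_right h2 ht0.le |>.trans_eq rfl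
  · rw [hhat.2]
end
end

section
/- Let ψ : (0,1] → (0,∞) be a cuspidal function satisfying the doubling condition ψ(2t) ≤ Cψ(t) for every t ∈ (0,1/2) and some constant C > 1, and let ψ̂ be the associated Lipschitz cuspidal function (ψ̂(t̂) = r_{t̂}, where ψ(t_{t̂}) ≤ r_{t̂} ≤ lim_{s→t_{t̂}⁺} ψ(s) and t_{t̂} + r_{t̂} = (1+ψ(1)) t̂). Then ψ̂ also satisfies a doubling condition: there is a constant C' > 1 with ψ̂(2t̂) ≤ C'ψ̂(t̂) for every t̂ ∈ (0,1/2). -/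
open MeasureTheory Set Filter Topology
open scoped ENNReal NNReal

noncomputable section

/-- the doubling condition transfers from `ψ` to `ψ̂`. -/
theorem statement13 (ψ ψhat : ℝ → ℝ) (hψ : IsCuspidal ψ)
    (C : ℝ) (hC : 1 < C)
    (hdoubling : ∀ t ∈ Set.Ioo (0:ℝ) (1/2), ψ (2 * t) ≤ C * ψ t)
    (hhat : IsAssociatedHat ψ ψhat) :
    ∃ C' : ℝ, 1 < C' ∧ ∀ t ∈ Set.Ioo (0:ℝ) (1/2), ψhat (2 * t) ≤ C' * ψhat t := by
  obtain ⟨hpair, -⟩ := hhat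
  have hψ1 : 0 < ψ 1 := hψ.pos 1 ⟨one_pos, le_refl 1⟩
  have hψhalf : 0 < ψ (1/2) := hψ.pos _ ⟨by norm_num, by norm_num⟩
  have hd : 0 < ψ 1 / ψ (1/2) := div_pos hψ1 hψhalf
  refine ⟨C + 2 + ψ 1 / ψ (1/2), by linarith, ?_⟩
  rintro that ⟨ht0, ht2⟩
  obtain ⟨t₁, ht₁0, ht₁1, hr₁0, hψr₁, hrlim₁, hsum₁⟩ := hpair that ⟨ht0, by linarith⟩
  obtain ⟨t₂, ht₂0, ht₂1, hr₂0, hψr₂, hrlim₂, hsum₂⟩ :=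
    hpair (2 * that) ⟨by linarith, by linarith⟩
  have hsum : t₂ + ψhat (2 * that) = 2 * (t₁ + ψhat that) := by
    linear_combination hsum₂ - 2 * hsum₁
  by_cases h : 2 * t₁ ≤ t₂
  · nlinarith
  · push_neg at h
    set s := min (2 * t₁) 1 with hs_def
    have hs : s ∈ Set.Ioc t₂ 1 := ⟨lt_min h ht₂1, min_le_right _ _⟩
    have hbdd : BddBelow (ψ '' Set.Ioc t₂ 1) := by
      refine ⟨0, fun y hy => ?_⟩
      obtain ⟨u, hu, rfl⟩ := hy
      exact (hψ.pos u ⟨lt_trans ht₂0 hu.1, hu.2⟩).le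
    have hle : rightLimAt ψ t₂ ≤ ψ s := csInf_le hbdd ⟨s, hs, rfl⟩
    have hr₂s : ψhat (2 * that) ≤ ψ s := le_trans hrlim₂ hle
    by_cases h1 : t₁ < 1/2
    · have hseq : s = 2 * t₁ := min_eq_left (by linarith)
      have hdb : ψ (2 * t₁) ≤ C * ψ t₁ := hdoubling t₁ ⟨ht₁0, h1⟩
      have hψt₁ : 0 < ψ t₁ := hψ.pos t₁ ⟨ht₁0, ht₁1.le⟩
      rw [hseq] at hr₂s
      nlinarith
    · push_neg at h1
      have hs0 : 0 < s := lt_min (by linarith) one_pos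
      have hψs1 : ψ s ≤ ψ 1 := hψ.mono ⟨hs0, hs.2⟩ ⟨one_pos, le_refl 1⟩ hs.2
      have hψhr : ψ (1/2) ≤ ψ t₁ :=
        hψ.mono ⟨by norm_num, by norm_num⟩ ⟨ht₁0, ht₁1.le⟩ h1
      have hkey : ψ 1 / ψ (1/2) * ψ (1/2) = ψ 1 := div_mul_cancel₀ _ hψhalf.ne'
      nlinarith [mul_le_mul_of_nonneg_left (hψhr.trans (hψr₁.trans (le_refl _))) hd.le]
end
end

section
/- Let ψ : (0,1] → (0,∞) be a cuspidal function and let ψ̂ be the associated Lipschitz cuspidal function (ψ̂(t̂) = r_{t̂}, where ψ(t_{t̂}) ≤ r_{t̂} ≤ lim_{s→t_{t̂}⁺} ψ(s) and t_{t̂} + r_{t̂} = (1+ψ(1)) t̂). Then for every t ∈ (0,1], ψ(t) ≥ ψ̂(t/(1+ψ(1))). -/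
open MeasureTheory Set Filter Topology
open scoped ENNReal NNReal

noncomputable section

/-- `ψ(t) ≥ ψ̂(t/(1+ψ(1)))` for every `t ∈ (0,1]`. -/
theorem statement14 (ψ ψhat : ℝ → ℝ) (hψ : IsCuspidal ψ)
    (hhat : IsAssociatedHat ψ ψhat) :
    ∀ t ∈ Set.Ioc (0:ℝ) 1, ψhat (t / (1 + ψ 1)) ≤ ψ t := by
  intro t ht
  have hψ1 : 0 < ψ 1 := hψ.pos 1 ⟨one_pos, le_refl 1⟩
  have h1 : (0:ℝ) < 1 + ψ 1 := by linarith
  set that := t / (1 + ψ 1) with hthat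
  have hmem : that ∈ Set.Ioo (0:ℝ) 1 := by
    constructor
    · exact div_pos ht.1 h1
    · rw [div_lt_one h1]; linarith [ht.2]
  obtain ⟨t', ht'0, ht'1, hr0, hle, hrle, hsum⟩ := hhat.1 that hmem
  have hsum' : t' + ψhat that = t := by
    rw [hsum, hthat, mul_div_cancel₀ _ (ne_of_gt h1)]
  have htmem : t ∈ Set.Ioc t' 1 := ⟨by linarith, ht.2⟩
  have hbdd : BddBelow (ψ '' Set.Ioc t' 1) := by
    refine ⟨0, ?_⟩
    rintro x ⟨s, hs, rfl⟩
    exact le_of_lt (hψ.pos s ⟨lt_trans ht'0 hs.1, hs.2⟩)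
  calc ψhat that ≤ rightLimAt ψ t' := hrle
    _ ≤ ψ t := csInf_le hbdd ⟨t, htmem, rfl⟩
end
end

section
/- Let n ≥ 2, let ψ : (0,1] → (0,∞) be a Lipschitz cuspidal function with ψ(t) ≤ Ct on (0,1] for some constant C, let 1 ≤ q < n-1 and (n-1)q/(n-1-q) ≤ p < ∞, and define on the annular set A_ψⁿ := {(t,x) ∈ (0,1]×ℝ^{n-1} : ψ(t) < |x| < 2ψ(t)} the cut-off function L(t,x) := 2 - |x|/ψ(t). Then |∇L(t,x)| ≤ C'/ψ(t) for almost every (t,x) ∈ A_ψⁿ (for some constant C' depending only on the Lipschitz constant of ψ), and ∫_{A_ψⁿ} |∇L(z)|^{pq/(p-q)} dz ≤ C'' ∫₀¹ ψ(t)^{n-1-pq/(p-q)} dt < ∞. -/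
open MeasureTheory Set Filter Topology
open scoped ENNReal NNReal

noncomputable section

set_option maxHeartbeats 1000000 in
/-- gradient bound for the cut-off function `L(t,x) = 2 - |x|/ψ(t)` on the
annular set `A_ψⁿ`, and finiteness of `∫_{A_ψⁿ} |∇L|^{pq/(p-q)}`. -/
theorem statement18 (n : ℕ) (hn : 2 ≤ n) (ψ : ℝ → ℝ) (hψ : IsCuspidal ψ)
    (K : ℝ≥0) (hLip : LipschitzOnWith K ψ (Set.Ioc 0 1))
    (Cψ : ℝ) (hCψ : ∀ t ∈ Set.Ioc (0:ℝ) 1, ψ t ≤ Cψ * t)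
    (p q : ℝ) (hq1 : 1 ≤ q) (hq2 : q < (n : ℝ) - 1)
    (hp : ((n : ℝ) - 1) * q / ((n : ℝ) - 1 - q) ≤ p) :
    ∃ C' : ℝ, 0 < C' ∧
      (∀ᵐ z ∂(volume.restrict (annulusSet n ψ)),
        ‖fderiv ℝ (cutoffL n ψ) z‖ ≤ C' / ψ z.1) ∧
      ∃ C'' : ℝ, 0 < C'' ∧
        (∫⁻ z in annulusSet n ψ,
            ENNReal.ofReal (‖fderiv ℝ (cutoffL n ψ) z‖ ^ (p * q / (p - q)))) ≤
          ENNReal.ofReal C'' *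
            (∫⁻ t in Set.Ioc (0:ℝ) 1,
              ENNReal.ofReal (ψ t ^ ((n : ℝ) - 1 - p * q / (p - q)))) ∧
        (∫⁻ t in Set.Ioc (0:ℝ) 1,
            ENNReal.ofReal (ψ t ^ ((n : ℝ) - 1 - p * q / (p - q)))) < ⊤ := by
  classical
  set m : ℝ := (n : ℝ) - 1 with hm
  have hq0 : 0 < q := lt_of_lt_of_le one_pos hq1
  have hmq : 0 < m - q := sub_pos.mpr hq2
  have hqp : q < p := by
    have h1 : q < m * q / (m - q) := by
      rw [lt_div_iff₀ hmq]; nlinarith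
    exact lt_of_lt_of_le h1 hp
  have hpq0 : 0 < p - q := sub_pos.mpr hqp
  set α : ℝ := p * q / (p - q) with hα
  have hα0 : 0 < α := div_pos (mul_pos (hq0.trans hqp) hq0) hpq0
  have hαle : α ≤ m := by
    rw [hα, div_le_iff₀ hpq0]
    have h2 : m * q ≤ p * (m - q) := (div_le_iff₀ hmq).mp hp
    nlinarith
  have hβ0 : 0 ≤ m - α := sub_nonneg.mpr hαle
  obtain ⟨g, hg, hEq⟩ := hLip.extend_real
  have hC'pos : (0:ℝ) < 2 + 4 * (K:ℝ) := by positivity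
  -- pointwise gradient bound away from t = 1
  have key : ∀ z : Rn n, z ∈ annulusSet n ψ → z.1 ≠ 1 →
      ‖fderiv ℝ (cutoffL n ψ) z‖ ≤ (2 + 4 * (K:ℝ)) / ψ z.1 := by
    rintro z ⟨⟨ht0, ht1⟩, hlo, hhi⟩ hne
    have ht1' : z.1 < 1 := lt_of_le_of_ne ht1 hne
    have hv : 0 < ψ z.1 := hψ.pos z.1 ⟨ht0, ht1⟩
    have hb0 : (0:ℝ) ≤ ‖z.2‖ := norm_nonneg _
    refine norm_fderiv_le_of_lip' ℝ (by positivity) ?_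
    set δ : ℝ := min (ψ z.1 / (2 * ((K:ℝ) + 1))) (min z.1 (1 - z.1)) with hδdef
    have hδ0 : 0 < δ := lt_min (by positivity) (lt_min ht0 (by linarith))
    filter_upwards [Metric.ball_mem_nhds z hδ0] with w hw
    rw [Metric.mem_ball, Prod.dist_eq, max_lt_iff] at hw
    obtain ⟨hd1, hd2⟩ := hw
    rw [Real.dist_eq] at hd1
    have hw1 : w.1 ∈ Set.Ioc (0:ℝ) 1 := by
      have h1 : |w.1 - z.1| < z.1 :=
        lt_of_lt_of_le hd1 ((min_le_right _ _).trans (min_le_left _ _))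
      have h2 : |w.1 - z.1| < 1 - z.1 :=
        lt_of_lt_of_le hd1 ((min_le_right _ _).trans (min_le_right _ _))
      have h1' := abs_lt.mp h1
      have h2' := abs_lt.mp h2
      constructor <;> [linarith [h1'.1]; linarith [h2'.2]]
    have hlipw : |ψ w.1 - ψ z.1| ≤ (K:ℝ) * |w.1 - z.1| := by
      have h := (lipschitzOnWith_iff_dist_le_mul.mp hLip) w.1 hw1 z.1 ⟨ht0, ht1⟩
      rwa [Real.dist_eq, Real.dist_eq] at h
    have hδK : |w.1 - z.1| ≤ ψ z.1 / (2 * ((K:ℝ) + 1)) :=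
      (hd1.trans_le (min_le_left _ _)).le
    have hKhalf : (K:ℝ) * |w.1 - z.1| ≤ ψ z.1 / 2 := by
      have hK0 : (0:ℝ) ≤ K := K.coe_nonneg
      have h1 : (K:ℝ) * |w.1 - z.1| ≤ (K:ℝ) * (ψ z.1 / (2 * ((K:ℝ) + 1))) :=
        mul_le_mul_of_nonneg_left hδK hK0
      have h2 : (K:ℝ) * (ψ z.1 / (2 * ((K:ℝ) + 1))) ≤ ψ z.1 / 2 := by
        rw [mul_div_assoc', div_le_div_iff₀ (by positivity) two_pos]
        nlinarith
      linarith
    have hu : ψ z.1 / 2 ≤ ψ w.1 := by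
      have := (abs_le.mp (hlipw.trans hKhalf)).1
      linarith
    have hu0 : 0 < ψ w.1 := lt_of_lt_of_le (by linarith) hu
    -- distances bounded by the product norm
    have hΔd : |w.1 - z.1| ≤ ‖w - z‖ := by
      rw [Prod.norm_def]
      exact le_trans (le_of_eq (by rfl)) (le_max_left _ _)
    have hxd : ‖w.2 - z.2‖ ≤ ‖w - z‖ := by
      rw [Prod.norm_def]
      exact le_max_right _ _
    have hd0 : (0:ℝ) ≤ ‖w - z‖ := norm_nonneg _
    have hab : |‖z.2‖ - ‖w.2‖| ≤ ‖w - z‖ := by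
      have h := abs_norm_sub_norm_le z.2 w.2
      rw [norm_sub_rev] at h
      exact h.trans hxd
    have hKd : |ψ w.1 - ψ z.1| ≤ (K:ℝ) * ‖w - z‖ :=
      hlipw.trans (mul_le_mul_of_nonneg_left hΔd K.coe_nonneg)
    have hexp : cutoffL n ψ w - cutoffL n ψ z
        = (‖z.2‖ * (ψ w.1 - ψ z.1) + ψ z.1 * (‖z.2‖ - ‖w.2‖)) / (ψ z.1 * ψ w.1) := by
      simp only [cutoffL]
      field_simp
      ring
    rw [Real.norm_eq_abs, hexp, abs_div, abs_of_pos (mul_pos hv hu0)]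
    have hnum : |‖z.2‖ * (ψ w.1 - ψ z.1) + ψ z.1 * (‖z.2‖ - ‖w.2‖)|
        ≤ (2 * (K:ℝ) + 1) * ‖w - z‖ * ψ z.1 := by
      calc |‖z.2‖ * (ψ w.1 - ψ z.1) + ψ z.1 * (‖z.2‖ - ‖w.2‖)|
          ≤ |‖z.2‖ * (ψ w.1 - ψ z.1)| + |ψ z.1 * (‖z.2‖ - ‖w.2‖)| := abs_add_le _ _
        _ = ‖z.2‖ * |ψ w.1 - ψ z.1| + ψ z.1 * |‖z.2‖ - ‖w.2‖| := by
            rw [abs_mul, abs_mul, abs_of_nonneg hb0, abs_of_pos hv]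
        _ ≤ (2 * (K:ℝ) + 1) * ‖w - z‖ * ψ z.1 := by
            nlinarith [mul_le_mul hhi.le hKd (abs_nonneg (ψ w.1 - ψ z.1)) (by positivity),
              mul_le_mul_of_nonneg_left hab hv.le]
    calc |‖z.2‖ * (ψ w.1 - ψ z.1) + ψ z.1 * (‖z.2‖ - ‖w.2‖)| / (ψ z.1 * ψ w.1)
        ≤ ((2 * (K:ℝ) + 1) * ‖w - z‖ * ψ z.1) / (ψ z.1 * (ψ z.1 / 2)) := by
          apply div_le_div₀ (by positivity) hnum (by positivity)
          exact mul_le_mul_of_nonneg_left hu hv.le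
      _ = (2 + 4 * (K:ℝ)) / ψ z.1 * ‖w - z‖ := by
          field_simp
          ring
  -- measurability of the annulus
  have hAeq : annulusSet n ψ
      = {z : Rn n | z.1 ∈ Set.Ioc (0:ℝ) 1 ∧ g z.1 < ‖z.2‖ ∧ ‖z.2‖ < 2 * g z.1} := by
    ext z
    simp only [annulusSet, Set.mem_setOf_eq]
    constructor
    · rintro ⟨h1, h2, h3⟩; rw [hEq h1] at h2 h3; exact ⟨h1, h2, h3⟩
    · rintro ⟨h1, h2, h3⟩; rw [← hEq h1] at h2 h3; exact ⟨h1, h2, h3⟩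
  have hgc : Continuous g := hg.continuous
  have hAmeas : MeasurableSet (annulusSet n ψ) := by
    rw [hAeq]
    have : {z : Rn n | z.1 ∈ Set.Ioc (0:ℝ) 1 ∧ g z.1 < ‖z.2‖ ∧ ‖z.2‖ < 2 * g z.1}
        = (Prod.fst ⁻¹' Set.Ioc (0:ℝ) 1) ∩
          ({z : Rn n | g z.1 < ‖z.2‖} ∩ {z : Rn n | ‖z.2‖ < 2 * g z.1}) := by
      ext z
      simp only [Set.mem_setOf_eq, Set.mem_inter_iff, Set.mem_preimage]
    rw [this]
    refine (measurable_fst measurableSet_Ioc).inter (MeasurableSet.inter ?_ ?_)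
    · exact measurableSet_lt (hgc.comp continuous_fst).measurable
        (continuous_snd.norm.measurable)
    · exact measurableSet_lt continuous_snd.norm.measurable
        ((continuous_const.mul (hgc.comp continuous_fst)).measurable)
  -- the a.e. gradient bound
  have haeA : ∀ᵐ z ∂(volume.restrict (annulusSet n ψ)),
      ‖fderiv ℝ (cutoffL n ψ) z‖ ≤ (2 + 4 * (K:ℝ)) / ψ z.1 := by
    have hNull : (volume : Measure (Rn n)) {z : Rn n | z.1 = 1} = 0 := by
      have hset : {z : Rn n | z.1 = 1}
          = ({(1:ℝ)} ×ˢ (Set.univ : Set (EuclideanSpace ℝ (Fin (n - 1))))) := by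
        ext z
        simp only [Set.mem_prod, Set.mem_singleton_iff, Set.mem_univ, and_true,
          Set.mem_setOf_eq]
      rw [hset, Measure.volume_eq_prod, Measure.prod_prod]
      simp
    have h2 : ∀ᵐ z ∂(volume.restrict (annulusSet n ψ)), z.1 ≠ 1 := by
      rw [ae_iff]
      refine le_antisymm (le_trans ?_ hNull.le) zero_le
      have hres := Measure.restrict_le_self
        (μ := (volume : Measure (Rn n))) (s := annulusSet n ψ)
      calc (volume.restrict (annulusSet n ψ)) {z : Rn n | ¬ z.1 ≠ 1}
          ≤ volume {z : Rn n | ¬ z.1 ≠ 1} := hres _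
        _ = volume {z : Rn n | z.1 = 1} := by simp only [not_not]
    filter_upwards [ae_restrict_mem hAmeas, h2] with z hz h1 using key z hz h1
  refine ⟨2 + 4 * (K:ℝ), hC'pos, haeA, ?_⟩
  -- setup for the integral bound
  haveI : Nonempty (Fin (n - 1)) := ⟨⟨0, by omega⟩⟩
  set c : ℝ≥0∞ := volume (Metric.ball (0 : EuclideanSpace ℝ (Fin (n - 1))) 1) with hc
  have hc_top : c ≠ ⊤ := measure_ball_lt_top.ne
  have hc_pos : 0 < c := Metric.measure_ball_pos _ _ one_pos
  have hc_real : 0 < c.toReal := ENNReal.toReal_pos hc_pos.ne' hc_top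
  set C'' : ℝ := (2 + 4 * (K:ℝ)) ^ α * 2 ^ m * c.toReal with hC''
  have hC''pos : 0 < C'' := by
    have h1 : (0:ℝ) < (2 + 4 * (K:ℝ)) ^ α := Real.rpow_pos_of_pos hC'pos α
    have h2 : (0:ℝ) < (2:ℝ) ^ m := Real.rpow_pos_of_pos two_pos m
    positivity
  set B : Set (Rn n) := {z : Rn n | z.1 ∈ Set.Ioc (0:ℝ) 1 ∧ ‖z.2‖ < 2 * g z.1} with hB
  have hBmeas : MeasurableSet B := by
    have : B = (Prod.fst ⁻¹' Set.Ioc (0:ℝ) 1) ∩ {z : Rn n | ‖z.2‖ < 2 * g z.1} := by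
      ext z
      simp only [hB, Set.mem_setOf_eq, Set.mem_inter_iff, Set.mem_preimage]
    rw [this]
    exact (measurable_fst measurableSet_Ioc).inter
      (measurableSet_lt continuous_snd.norm.measurable
        ((continuous_const.mul (hgc.comp continuous_fst)).measurable))
  set F : ℝ → ℝ≥0∞ := fun t => ENNReal.ofReal (((2 + 4 * (K:ℝ)) / g t) ^ α) with hF
  have hFmeas : Measurable F := by
    apply ENNReal.measurable_ofReal.comp
    exact (Real.continuous_rpow_const hα0.le).measurable.comp
      (measurable_const.div hgc.measurable)
  -- step 1 : bound the integrand a.e.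
  have step1 : (∫⁻ z in annulusSet n ψ,
        ENNReal.ofReal (‖fderiv ℝ (cutoffL n ψ) z‖ ^ α))
      ≤ ∫⁻ z in annulusSet n ψ, F z.1 := by
    refine lintegral_mono_ae ?_
    filter_upwards [haeA, ae_restrict_mem hAmeas] with z hz hzA
    have hgz : g z.1 = ψ z.1 := (hEq hzA.1).symm
    rw [hF]
    simp only []
    rw [hgz]
    exact ENNReal.ofReal_le_ofReal (Real.rpow_le_rpow (norm_nonneg _) hz hα0.le)
  have step2 : (∫⁻ z in annulusSet n ψ, F z.1) ≤ ∫⁻ z in B, F z.1 := by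
    apply lintegral_mono_set
    rw [hAeq]
    rintro z ⟨h1, _, h3⟩
    exact ⟨h1, h3⟩
  -- step 3 : Fubini
  have slice : ∀ t : ℝ, Prod.mk t ⁻¹' B
      = if t ∈ Set.Ioc (0:ℝ) 1 then
          Metric.ball (0 : EuclideanSpace ℝ (Fin (n - 1))) (2 * g t) else ∅ := by
    intro t
    split_ifs with ht
    · ext x
      simp only [hB, Set.mem_preimage, Set.mem_setOf_eq, mem_ball_zero_iff]
      exact ⟨fun h => h.2, fun h => ⟨ht, h⟩⟩
    · ext x
      simp only [hB, Set.mem_preimage, Set.mem_setOf_eq, Set.mem_empty_iff_false, iff_false,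
        not_and]
      exact fun h => absurd h ht
  have inner : ∀ t : ℝ, (∫⁻ x, B.indicator (fun z : Rn n => F z.1) (t, x))
      = (Set.Ioc (0:ℝ) 1).indicator
          (fun t => F t * volume (Metric.ball
            (0 : EuclideanSpace ℝ (Fin (n - 1))) (2 * g t))) t := by
    intro t
    have h1 : (fun x : EuclideanSpace ℝ (Fin (n - 1)) =>
          B.indicator (fun z : Rn n => F z.1) (t, x))
        = (Prod.mk t ⁻¹' B).indicator (fun _ => F t) := by
      funext x
      simp only [Set.indicator, Set.mem_preimage]
    rw [h1, lintegral_indicator (measurable_prodMk_left hBmeas) _,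
      setLIntegral_const, slice t]
    split_ifs with ht
    · rw [Set.indicator_of_mem ht]
    · simp [Set.indicator_of_notMem ht]
  have step3 : (∫⁻ z in B, F z.1)
      = ∫⁻ t in Set.Ioc (0:ℝ) 1,
          F t * volume (Metric.ball
            (0 : EuclideanSpace ℝ (Fin (n - 1))) (2 * g t)) := by
    have hmeas : Measurable (B.indicator (fun z : Rn n => F z.1)) :=
      Measurable.indicator (hFmeas.comp measurable_fst) hBmeas
    rw [← lintegral_indicator hBmeas _, Measure.volume_eq_prod,
      lintegral_prod _ hmeas.aemeasurable]
    simp_rw [inner]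
    rw [lintegral_indicator measurableSet_Ioc _]
  -- step 4 : pointwise estimate of the sliced integrand
  have step4 : ∀ t ∈ Set.Ioc (0:ℝ) 1,
      F t * volume (Metric.ball (0 : EuclideanSpace ℝ (Fin (n - 1))) (2 * g t))
      ≤ ENNReal.ofReal C'' * ENNReal.ofReal (ψ t ^ (m - α)) := by
    intro t ht
    have hψt : 0 < ψ t := hψ.pos t ht
    have hgt : g t = ψ t := (hEq ht).symm
    have hball : volume (Metric.ball (0 : EuclideanSpace ℝ (Fin (n - 1))) (2 * g t))
        = ENNReal.ofReal ((2 * ψ t) ^ (n - 1)) * c := by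
      rw [hgt, Measure.addHaar_ball _ _ (by positivity), finrank_euclideanSpace_fin]
    rw [hball, hF]
    simp only []
    rw [hgt, ← ENNReal.ofReal_toReal hc_top, ← ENNReal.ofReal_mul (by positivity),
      ← ENNReal.ofReal_mul (by positivity), ← ENNReal.ofReal_mul hC''pos.le]
    apply ENNReal.ofReal_le_ofReal
    apply le_of_eq
    have hcast : ((n - 1 : ℕ) : ℝ) = m := by
      rw [hm]
      have h1 : (1:ℕ) ≤ n := by omega
      push_cast [Nat.cast_sub h1]
      ring
    have hψα : (0:ℝ) < ψ t ^ α := Real.rpow_pos_of_pos hψt α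
    have hsplit : ψ t ^ m = ψ t ^ (m - α) * ψ t ^ α := by
      rw [← Real.rpow_add hψt]
      ring_nf
    rw [← Real.rpow_natCast (2 * ψ t) (n - 1), hcast,
      Real.mul_rpow (by norm_num) hψt.le,
      Real.div_rpow hC'pos.le hψt.le, hC'', hsplit]
    have hgen : ∀ (A B X Y c : ℝ), Y ≠ 0 → A / Y * (B * (X * Y) * c) = A * B * c * X := by
      intro A B X Y c hY
      field_simp
    exact hgen _ _ _ _ _ hψα.ne'
  have step5 : (∫⁻ t in Set.Ioc (0:ℝ) 1,
        F t * volume (Metric.ball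
          (0 : EuclideanSpace ℝ (Fin (n - 1))) (2 * g t)))
      ≤ ENNReal.ofReal C'' * ∫⁻ t in Set.Ioc (0:ℝ) 1, ENNReal.ofReal (ψ t ^ (m - α)) := by
    rw [← lintegral_const_mul' _ _ ENNReal.ofReal_ne_top]
    refine lintegral_mono_ae ?_
    filter_upwards [ae_restrict_mem measurableSet_Ioc] with t ht using step4 t ht
  -- finiteness
  have hfinI : (∫⁻ t in Set.Ioc (0:ℝ) 1, ENNReal.ofReal (ψ t ^ (m - α))) < ⊤ := by
    set M : ℝ := max (ψ 1) 1 with hM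
    have hb : ∀ t ∈ Set.Ioc (0:ℝ) 1,
        ENNReal.ofReal (ψ t ^ (m - α)) ≤ ENNReal.ofReal (M ^ (m - α)) := by
      intro t ht
      apply ENNReal.ofReal_le_ofReal
      apply Real.rpow_le_rpow (hψ.pos t ht).le ?_ hβ0
      exact le_trans (hψ.mono ht (Set.right_mem_Ioc.mpr one_pos) ht.2) (le_max_left _ _)
    calc (∫⁻ t in Set.Ioc (0:ℝ) 1, ENNReal.ofReal (ψ t ^ (m - α)))
        ≤ ∫⁻ _ in Set.Ioc (0:ℝ) 1, ENNReal.ofReal (M ^ (m - α)) := by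
          refine lintegral_mono_ae ?_
          filter_upwards [ae_restrict_mem measurableSet_Ioc] with t ht using hb t ht
      _ = ENNReal.ofReal (M ^ (m - α)) * volume (Set.Ioc (0:ℝ) 1) :=
          setLIntegral_const _ _
      _ < ⊤ := by
          rw [Real.volume_Ioc]
          exact ENNReal.mul_lt_top ENNReal.ofReal_lt_top (by simp)
  have hmα : m - α = (n : ℝ) - 1 - α := by rw [hm]
  refine ⟨C'', hC''pos, ?_, by rw [← hmα] at *; exact hfinI⟩
  rw [← hmα]
  exact le_trans (le_trans (le_trans step1 step2) (le_of_eq step3)) step5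
end
end

section
/- Let n ≥ 2 and let ψ : (0,1] → (0,∞) be a Lipschitz cuspidal function. Define the reflection ℛ : A_ψⁿ → Ω_ψⁿ on the annular set A_ψⁿ := {(t,x) ∈ (0,1]×ℝ^{n-1} : ψ(t) < |x| < 2ψ(t)} by ℛ(t,x) := (t, (−|x|/2 + (3/2)ψ(t)) · x/|x|). Then there is a constant C > 1, depending only on the Lipschitz constant of ψ, such that for almost every z ∈ A_ψⁿ the differential satisfies |Dℛ(z)| ≤ C and 1/C ≤ |J_ℛ(z)| ≤ C, where J_ℛ denotes the Jacobian determinant of ℛ. -/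
open MeasureTheory Set Filter Topology
open scoped ENNReal NNReal

noncomputable section

lemma aux_hasFDerivAt_norm {F : Type*} [NormedAddCommGroup F] [InnerProductSpace ℝ F]
    {x : F} (hx : x ≠ 0) : HasFDerivAt (fun y => ‖y‖) (‖x‖⁻¹ • innerSL ℝ x) x := by
  have hN : (0:ℝ) < ‖x‖ := norm_pos_iff.2 hx
  have h1 : HasFDerivAt (fun y : F => ‖y‖ ^ 2) (2 • innerSL ℝ x) x := by
    simpa using (hasFDerivAt_id x).norm_sq
  have h2 : HasDerivAt Real.sqrt (1 / (2 * Real.sqrt (‖x‖ ^ 2))) (‖x‖ ^ 2) :=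
    Real.hasDerivAt_sqrt (by positivity)
  have h3 := h2.comp_hasFDerivAt x h1
  have heq : (fun y : F => Real.sqrt (‖y‖ ^ 2)) = fun y => ‖y‖ := by
    funext y; rw [Real.sqrt_sq (norm_nonneg y)]
  rw [Function.comp_def, heq] at h3
  refine h3.congr_fderiv ?_
  rw [Real.sqrt_sq (norm_nonneg x)]
  ext y
  simp [smul_smul]
  ring

lemma aux_deriv (n : ℕ) (ψ : ℝ → ℝ) (z : Rn n) (hx : z.2 ≠ 0) (dψ : ℝ)
    (hd : HasDerivAt ψ dψ z.1) :
    ∃ D : Rn n →L[ℝ] Rn n, HasFDerivAt (reflectR n ψ) D z ∧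
      ∀ s : ℝ, ∀ y : EuclideanSpace ℝ (Fin (n-1)), D (s, y) =
        (s, ((3/2 * dψ / ‖z.2‖) * s
              - (3/2 * ψ z.1 / ‖z.2‖^3) * (inner ℝ z.2 y : ℝ)) • z.2
            + ((-‖z.2‖ / 2 + 3 / 2 * ψ z.1) / ‖z.2‖) • y) := by
  set E := EuclideanSpace ℝ (Fin (n-1))
  have hN : (0:ℝ) < ‖z.2‖ := norm_pos_iff.2 hx
  have hfst : HasFDerivAt (fun w : Rn n => w.1) (ContinuousLinearMap.fst ℝ ℝ E) z :=
    hasFDerivAt_fst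
  have hsnd : HasFDerivAt (fun w : Rn n => w.2) (ContinuousLinearMap.snd ℝ ℝ E) z :=
    hasFDerivAt_snd
  have hpsi : HasFDerivAt (fun w : Rn n => ψ w.1)
      (dψ • ContinuousLinearMap.fst ℝ ℝ E) z := hd.comp_hasFDerivAt z hfst
  have hnorm : HasFDerivAt (fun w : Rn n => ‖w.2‖)
      ((‖z.2‖⁻¹ • innerSL ℝ z.2).comp (ContinuousLinearMap.snd ℝ ℝ E)) z :=
    (aux_hasFDerivAt_norm hx).comp z hsnd
  have hinv : HasFDerivAt (fun w : Rn n => (‖w.2‖)⁻¹)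
      ((-(‖z.2‖^2)⁻¹) • ((‖z.2‖⁻¹ • innerSL ℝ z.2).comp (ContinuousLinearMap.snd ℝ ℝ E))) z :=
    (hasDerivAt_inv hN.ne').comp_hasFDerivAt z hnorm
  have hnum := ((hnorm.neg).mul_const ((2:ℝ)⁻¹)).add (hpsi.const_mul (3/2 : ℝ))
  have hc := hnum.mul hinv
  have hg := hc.smul hsnd
  have hR' := hfst.prodMk hg
  have hfun : reflectR n ψ = (fun w : Rn n =>
      (w.1, ((-‖w.2‖ * (2:ℝ)⁻¹ + 3/2 * ψ w.1) * (‖w.2‖)⁻¹) • w.2)) := by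
    funext w
    simp [reflectR, div_eq_mul_inv]
  replace hR' := hR'.congr_of_eventuallyEq (Filter.Eventually.of_forall (fun w => congrFun hfun w))
  refine ⟨_, hR', ?_⟩
  intro s y
  refine Prod.ext rfl ?_
  simp only [ContinuousLinearMap.prod_apply, ContinuousLinearMap.add_apply,
    ContinuousLinearMap.coe_fst', ContinuousLinearMap.coe_snd',
    ContinuousLinearMap.smul_apply, ContinuousLinearMap.coe_comp',
    Function.comp_apply, ContinuousLinearMap.smulRight_apply,
    ContinuousLinearMap.neg_apply, ContinuousLinearMap.coe_smul',
    Pi.smul_apply, smul_eq_mul, innerSL_apply_apply, Pi.add_apply, Pi.neg_apply]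
  rw [add_comm]
  have hNe : ‖z.2‖ ≠ 0 := (norm_pos_iff.2 hx).ne'
  congr 1
  congr 1
  field_simp
  ring

set_option maxHeartbeats 2000000 in
lemma aux_key (n : ℕ) (hn : 2 ≤ n) (ψ : ℝ → ℝ) (K : ℝ≥0) (z : Rn n)
    (h1 : ψ z.1 < ‖z.2‖) (h2 : ‖z.2‖ < 2 * ψ z.1)
    (dψ : ℝ) (hd : HasDerivAt ψ dψ z.1) (hdK : |dψ| ≤ K) :
    ‖fderiv ℝ (reflectR n ψ) z‖ ≤ 3 * K + 4 ∧
    (1/4 : ℝ) ^ n ≤ |LinearMap.det ((fderiv ℝ (reflectR n ψ) z).toLinearMap)| ∧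
    |LinearMap.det ((fderiv ℝ (reflectR n ψ) z).toLinearMap)| ≤ 1 := by
  set E := EuclideanSpace ℝ (Fin (n-1)) with hE
  have hψt : 0 < ψ z.1 := by nlinarith [norm_nonneg z.2]
  have hN : (0:ℝ) < ‖z.2‖ := lt_trans hψt h1
  have hNe : ‖z.2‖ ≠ 0 := hN.ne'
  have hx : z.2 ≠ 0 := by simpa [norm_pos_iff] using hN
  obtain ⟨D, hD, hDap⟩ := aux_deriv n ψ z hx dψ hd
  rw [hD.fderiv]
  set N := ‖z.2‖ with hNdef
  set c : ℝ := (-N / 2 + 3 / 2 * ψ z.1) / N with hc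
  have hc1 : (1/4 : ℝ) < c := by
    rw [hc, lt_div_iff₀ hN]; nlinarith
  have hc2 : c < 1 := by
    rw [hc, div_lt_one hN]; nlinarith
  have hKnn : (0:ℝ) ≤ K := K.coe_nonneg
  constructor
  · -- operator norm bound
    apply ContinuousLinearMap.opNorm_le_bound _ (by positivity)
    rintro ⟨s, y⟩
    rw [hDap s y]
    have hv1 : |s| ≤ ‖(s, y)‖ := norm_fst_le (s, y)
    have hv2 : ‖y‖ ≤ ‖(s, y)‖ := norm_snd_le (s, y)
    have hvnn : (0:ℝ) ≤ ‖(s, y)‖ := norm_nonneg _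
    rw [Prod.norm_def]
    apply max_le
    · calc ‖s‖ ≤ ‖(s,y)‖ := hv1
        _ ≤ (3 * K + 4) * ‖(s, y)‖ := by nlinarith
    · have hinner : |(inner ℝ z.2 y : ℝ)| ≤ N * ‖y‖ := abs_real_inner_le_norm z.2 y
      have hA : |3 / 2 * dψ / N * s| ≤ 3 / 2 * K / N * |s| := by
        rw [abs_mul, abs_div, abs_mul, abs_of_pos hN]
        have h32 : |(3:ℝ)/2| = 3/2 := by norm_num
        rw [h32]
        gcongr
      have hB : |3 / 2 * ψ z.1 / N ^ 3 * (inner ℝ z.2 y : ℝ)| ≤ 3/2 * ψ z.1 / N^2 * ‖y‖ := by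
        rw [abs_mul]
        have hpos : |(3:ℝ) / 2 * ψ z.1 / N ^ 3| = 3 / 2 * ψ z.1 / N ^ 3 :=
          abs_of_pos (by positivity)
        rw [hpos]
        calc 3 / 2 * ψ z.1 / N ^ 3 * |(inner ℝ z.2 y : ℝ)|
            ≤ 3 / 2 * ψ z.1 / N ^ 3 * (N * ‖y‖) :=
              mul_le_mul_of_nonneg_left hinner (by positivity)
          _ = 3/2 * ψ z.1 / N^2 * ‖y‖ := by field_simp
      have hcoef : |3 / 2 * dψ / N * s - 3 / 2 * ψ z.1 / N ^ 3 * (inner ℝ z.2 y : ℝ)|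
          ≤ 3/2 * K / N * |s| + 3/2 * ψ z.1 / N^2 * ‖y‖ :=
        (abs_sub _ _).trans (add_le_add hA hB)
      have hcabs : |c| ≤ 1 := by
        rw [abs_of_pos (by linarith : (0:ℝ) < c)]; linarith
      calc ‖(3 / 2 * dψ / N * s - 3 / 2 * ψ z.1 / N ^ 3 * (inner ℝ z.2 y : ℝ)) • z.2 + c • y‖
          ≤ ‖(3 / 2 * dψ / N * s - 3 / 2 * ψ z.1 / N ^ 3 * (inner ℝ z.2 y : ℝ)) • z.2‖ + ‖c • y‖ :=
            norm_add_le _ _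
        _ = |3 / 2 * dψ / N * s - 3 / 2 * ψ z.1 / N ^ 3 * (inner ℝ z.2 y : ℝ)| * N + |c| * ‖y‖ := by
            rw [norm_smul, norm_smul]; rfl
        _ ≤ (3/2 * K / N * |s| + 3/2 * ψ z.1 / N^2 * ‖y‖) * N + 1 * ‖y‖ :=
            add_le_add (mul_le_mul_of_nonneg_right hcoef hN.le)
              (mul_le_mul_of_nonneg_right hcabs (norm_nonneg y))
        _ = 3/2 * K * |s| + 3/2 * (ψ z.1 / N) * ‖y‖ + ‖y‖ := by field_simp
        _ ≤ 3/2 * K * ‖(s,y)‖ + 3/2 * 1 * ‖(s,y)‖ + ‖(s,y)‖ := by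
            refine add_le_add (add_le_add ?_ ?_) hv2
            · exact mul_le_mul_of_nonneg_left hv1 (by positivity)
            · have hr : ψ z.1 / N ≤ 1 := by rw [div_le_one hN]; linarith
              exact mul_le_mul (by linarith) hv2 (norm_nonneg y) (by norm_num)
        _ ≤ (3 * K + 4) * ‖(s, y)‖ := by nlinarith
  · -- determinant
    have hm : 0 < n - 1 := by omega
    set i0 : Fin (n-1) := ⟨0, hm⟩ with hi0
    set u : E := N⁻¹ • z.2 with hu
    have hu_norm : ‖u‖ = 1 := by
      rw [hu, norm_smul, norm_inv, Real.norm_eq_abs, abs_of_pos hN]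
      field_simp; rfl
    have horth : Orthonormal ℝ (({i0} : Set (Fin (n-1))).restrict (fun _ => u)) := by
      constructor
      · intro i; exact hu_norm
      · intro i j hij
        exact absurd (Subtype.ext ((i.2 : (i:Fin (n-1)) ∈ ({i0} : Set (Fin (n-1)))).trans
          ((j.2 : (j:Fin (n-1)) ∈ ({i0} : Set (Fin (n-1)))).symm))) hij
    have hcard : Module.finrank ℝ E = Fintype.card (Fin (n-1)) := by
      rw [Fintype.card_fin]
      exact finrank_euclideanSpace_fin
    obtain ⟨b, hb⟩ := horth.exists_orthonormalBasis_extension_of_card_eq hcard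
    have hb0 : b i0 = u := hb i0 rfl
    set bp := (Module.Basis.singleton Unit ℝ).prod b.toBasis with hbp
    set d : Fin (n-1) → ℝ := fun i => if i = i0 then (-1/2 : ℝ) else c with hd_def
    have hz2u : z.2 = N • u := by
      rw [hu, smul_smul]
      field_simp; rw [one_smul]
    have hdet1 : LinearMap.det (D.toLinearMap) = (LinearMap.toMatrix bp bp D.toLinearMap).det :=
      (LinearMap.det_toMatrix bp D.toLinearMap).symm
    have hmat : LinearMap.toMatrix bp bp D.toLinearMap =
        Matrix.fromBlocks 1 0 (Matrix.of fun i _ => b.repr ((3/2 * dψ / N) • z.2) i)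
          (Matrix.diagonal d) := by
      ext i j
      rw [LinearMap.toMatrix_apply]
      cases j with
      | inl j =>
        have hbpj : bp (Sum.inl j) = ((1:ℝ), (0:E)) := by
          refine Prod.ext ?_ ?_
          · rw [hbp, Module.Basis.prod_apply_inl_fst, Module.Basis.singleton_apply]
          · rw [hbp, Module.Basis.prod_apply_inl_snd]
        have hD10 : D ((1:ℝ), (0:E)) = ((1:ℝ), (3/2 * dψ / N) • z.2) := by
          rw [hDap]
          simp
        rw [hbpj]
        cases i with
        | inl i =>
          rw [hbp, ContinuousLinearMap.coe_coe, hD10, Module.Basis.prod_repr_inl,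
            Module.Basis.singleton_repr]
          simp [Matrix.fromBlocks_apply₁₁, Matrix.one_apply]
        | inr i =>
          rw [hbp, ContinuousLinearMap.coe_coe, hD10, Module.Basis.prod_repr_inr,
            OrthonormalBasis.coe_toBasis_repr_apply]
          simp [Matrix.fromBlocks_apply₂₁]
      | inr j =>
        have hbpj : bp (Sum.inr j) = ((0:ℝ), b j) := by
          refine Prod.ext ?_ ?_
          · rw [hbp, Module.Basis.prod_apply_inr_fst]
          · rw [hbp, Module.Basis.prod_apply_inr_snd, OrthonormalBasis.coe_toBasis]
        by_cases hj : j = i0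
        · have hbj : b j = u := by rw [hj]; exact hb0
          have hinner0 : (inner ℝ z.2 (b j) : ℝ) = N := by
            rw [hbj, hu, real_inner_smul_right, real_inner_self_eq_norm_mul_norm]
            field_simp; rfl
          have hval : D ((0:ℝ), b j) = ((0:ℝ), (-1/2 : ℝ) • b j) := by
            rw [hDap]
            refine Prod.ext rfl ?_
            show (3 / 2 * dψ / N * 0 - 3 / 2 * ψ z.1 / N ^ 3 * (inner ℝ z.2 (b j) : ℝ)) • z.2
                + c • b j = (-1/2 : ℝ) • b j
            rw [hinner0, hz2u, ← hbj, smul_smul, ← add_smul]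
            congr 1
            rw [hc]
            field_simp
            ring
          rw [hbpj]
          cases i with
          | inl i =>
            rw [hbp, ContinuousLinearMap.coe_coe, hval, Module.Basis.prod_repr_inl,
              Module.Basis.singleton_repr]
            simp [Matrix.fromBlocks_apply₁₂]
          | inr i =>
            rw [hbp, ContinuousLinearMap.coe_coe, hval, Module.Basis.prod_repr_inr]
            rw [show ((-1/2 : ℝ) • b j : E) = (-1/2 : ℝ) • b.toBasis j by
              rw [OrthonormalBasis.coe_toBasis]]
            rw [_root_.map_smul, Module.Basis.repr_self]
            simp only [Matrix.fromBlocks_apply₂₂, Matrix.diagonal_apply, Finsupp.single_apply,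
              hj, d, Finsupp.smul_single, smul_eq_mul, mul_one]
            by_cases hii : i = i0
            · simp [hii]
            · simp [hii, Ne.symm hii]
        · have hinner0 : (inner ℝ z.2 (b j) : ℝ) = 0 := by
            rw [hz2u, ← hb0, real_inner_smul_left]
            rw [(OrthonormalBasis.orthonormal b).2 (fun h : i0 = j => hj h.symm), mul_zero]
          have hval : D ((0:ℝ), b j) = ((0:ℝ), c • b j) := by
            rw [hDap]
            refine Prod.ext rfl ?_
            show (3 / 2 * dψ / N * 0 - 3 / 2 * ψ z.1 / N ^ 3 * (inner ℝ z.2 (b j) : ℝ)) • z.2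
                + c • b j = c • b j
            rw [hinner0]
            simp
          rw [hbpj]
          cases i with
          | inl i =>
            rw [hbp, ContinuousLinearMap.coe_coe, hval, Module.Basis.prod_repr_inl,
              Module.Basis.singleton_repr]
            simp [Matrix.fromBlocks_apply₁₂]
          | inr i =>
            rw [hbp, ContinuousLinearMap.coe_coe, hval, Module.Basis.prod_repr_inr]
            rw [show (c • b j : E) = c • b.toBasis j by rw [OrthonormalBasis.coe_toBasis]]
            rw [_root_.map_smul, Module.Basis.repr_self]
            simp only [Matrix.fromBlocks_apply₂₂, Matrix.diagonal_apply, Finsupp.smul_single,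
              smul_eq_mul, mul_one]
            by_cases hij : i = j
            · subst hij
              simp [Finsupp.single_apply, d, hj]
            · rw [if_neg hij, Finsupp.single_apply, if_neg (fun h : j = i => hij h.symm)]
    rw [hdet1, hmat, Matrix.det_fromBlocks_zero₁₂, Matrix.det_one, Matrix.det_diagonal, one_mul,
      Finset.abs_prod]
    have habs : ∀ i : Fin (n-1), |d i| = if i = i0 then 1/2 else c := by
      intro i
      simp only [hd_def]
      by_cases hi : i = i0
      · rw [if_pos hi, if_pos hi, abs_of_neg (by norm_num : (-1/2 : ℝ) < 0)]
        norm_num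
      · rw [if_neg hi, if_neg hi, abs_of_pos (by linarith : (0:ℝ) < c)]
    have hd_ge : ∀ i, (1/4 : ℝ) ≤ |d i| := by
      intro i
      rw [habs i]
      by_cases hi : i = i0
      · rw [if_pos hi]; norm_num
      · rw [if_neg hi]; linarith
    have hd_le : ∀ i, |d i| ≤ 1 := by
      intro i
      rw [habs i]
      by_cases hi : i = i0
      · rw [if_pos hi]; norm_num
      · rw [if_neg hi]; linarith
    constructor
    · calc (1/4 : ℝ) ^ n ≤ (1/4 : ℝ) ^ (n - 1) :=
            pow_le_pow_of_le_one (by norm_num) (by norm_num) (by omega)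
        _ = ∏ _i : Fin (n-1), (1/4 : ℝ) := by
            rw [Finset.prod_const, Finset.card_univ, Fintype.card_fin]
        _ ≤ ∏ i, |d i| := Finset.prod_le_prod (fun i _ => by norm_num) (fun i _ => hd_ge i)
    · exact Finset.prod_le_one (fun i _ => abs_nonneg _) (fun i _ => hd_le i)

/-- the reflection `ℛ(t,x) = (t, (-|x|/2 + (3/2)ψ(t)) x/|x|)` has bounded
differential and Jacobian determinant bounded away from `0` and `∞` a.e. on `A_ψⁿ`. -/
theorem statement19 (n : ℕ) (hn : 2 ≤ n) (ψ : ℝ → ℝ) (hψ : IsCuspidal ψ)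
    (K : ℝ≥0) (hLip : LipschitzOnWith K ψ (Set.Ioc 0 1)) :
    ∃ C : ℝ, 1 < C ∧
      ∀ᵐ z ∂(volume.restrict (annulusSet n ψ)),
        ‖fderiv ℝ (reflectR n ψ) z‖ ≤ C ∧
        1 / C ≤ |LinearMap.det ((fderiv ℝ (reflectR n ψ) z).toLinearMap)| ∧
        |LinearMap.det ((fderiv ℝ (reflectR n ψ) z).toLinearMap)| ≤ C := by
  classical
  obtain ⟨ψ', hψ'lip, hψeq⟩ := hLip.extend_real
  have h4pos : (0:ℝ) < 4 ^ n := by positivity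
  have hKnn : (0:ℝ) ≤ K := K.coe_nonneg
  refine ⟨4 ^ n + 3 * K + 4, by linarith, ?_⟩
  -- measurability of the annulus
  have hset : annulusSet n ψ = ({z : Rn n | z.1 ∈ Set.Ioc (0:ℝ) 1} ∩
      {z : Rn n | ψ' z.1 < ‖z.2‖}) ∩ {z : Rn n | ‖z.2‖ < 2 * ψ' z.1} := by
    ext z
    simp only [annulusSet, Set.mem_setOf_eq, Set.mem_inter_iff]
    constructor
    · rintro ⟨h1, h2, h3⟩
      rw [← hψeq h1]
      exact ⟨⟨h1, h2⟩, h3⟩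
    · rintro ⟨⟨h1, h2⟩, h3⟩
      rw [← hψeq h1] at h2 h3
      exact ⟨h1, h2, h3⟩
  have hcont : Continuous ψ' := hψ'lip.continuous
  have hmeas : MeasurableSet (annulusSet n ψ) := by
    rw [hset]
    refine MeasurableSet.inter (MeasurableSet.inter ?_ ?_) ?_
    · exact measurable_fst measurableSet_Ioc
    · exact measurableSet_lt ((hcont.comp continuous_fst).measurable)
        ((continuous_norm.comp continuous_snd).measurable)
    · exact measurableSet_lt ((continuous_norm.comp continuous_snd).measurable)
        (((continuous_const.mul (hcont.comp continuous_fst))).measurable)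
  -- a.e. good points
  have hT : ∀ᵐ t : ℝ ∂volume, t ≠ 1 ∧ DifferentiableAt ℝ ψ' t := by
    have h1 : ∀ᵐ t : ℝ ∂volume, t ≠ 1 := by
      rw [ae_iff]
      have h2 : {t : ℝ | ¬ t ≠ 1} = {1} := by ext t; simp
      rw [h2]
      exact measure_singleton 1
    exact h1.and hψ'lip.ae_differentiableAt
  have hprod : ∀ᵐ z : Rn n ∂volume, z.1 ≠ 1 ∧ DifferentiableAt ℝ ψ' z.1 := by
    rw [ae_iff] at hT ⊢
    have hsub : {z : Rn n | ¬(z.1 ≠ 1 ∧ DifferentiableAt ℝ ψ' z.1)} ⊆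
        {t : ℝ | ¬(t ≠ 1 ∧ DifferentiableAt ℝ ψ' t)} ×ˢ
          (Set.univ : Set (EuclideanSpace ℝ (Fin (n-1)))) := by
      intro z hz
      exact ⟨hz, Set.mem_univ _⟩
    refine measure_mono_null hsub ?_
    rw [MeasureTheory.Measure.volume_eq_prod, MeasureTheory.Measure.prod_prod, hT, zero_mul]
  filter_upwards [ae_restrict_of_ae hprod, ae_restrict_mem hmeas] with z hz hzmem
  obtain ⟨hz1ne, hzdiff⟩ := hz
  obtain ⟨hz1, hz2, hz3⟩ := hzmem
  have ht1 : z.1 < 1 := lt_of_le_of_ne hz1.2 hz1ne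
  have hnhds : Set.Ioo (0:ℝ) 1 ∈ 𝓝 z.1 := Ioo_mem_nhds hz1.1 ht1
  have hev : ψ =ᶠ[𝓝 z.1] ψ' :=
    Filter.eventually_of_mem hnhds (fun t ht => hψeq (Set.Ioo_subset_Ioc_self ht))
  have hdiffψ : HasDerivAt ψ (deriv ψ' z.1) z.1 :=
    (hzdiff.hasDerivAt).congr_of_eventuallyEq hev
  have hdK : |deriv ψ' z.1| ≤ K := by
    have hF := hzdiff.hasFDerivAt.le_of_lipschitz hψ'lip
    have h1 : deriv ψ' z.1 = fderiv ℝ ψ' z.1 1 := (fderiv_apply_one_eq_deriv).symm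
    rw [← Real.norm_eq_abs, h1]
    calc ‖fderiv ℝ ψ' z.1 1‖ ≤ ‖fderiv ℝ ψ' z.1‖ * ‖(1:ℝ)‖ :=
          (fderiv ℝ ψ' z.1).le_opNorm 1
      _ ≤ K := by rw [norm_one, mul_one]; exact hF
  obtain ⟨hb1, hb2, hb3⟩ := aux_key n hn ψ K z hz2 hz3 (deriv ψ' z.1) hdiffψ hdK
  refine ⟨by linarith, ?_, by linarith⟩
  have h14 : ((1:ℝ)/4) ^ n = 1 / 4 ^ n := by
    rw [div_pow, one_pow]
  calc 1 / (4 ^ n + 3 * (K:ℝ) + 4) ≤ 1 / 4 ^ n := by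
        apply one_div_le_one_div_of_le h4pos
        linarith
    _ = ((1:ℝ)/4) ^ n := h14.symm
    _ ≤ _ := hb2
end
end
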